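/- arXiv:2309.02749 — 5 statements merged into one kernel-verified Lean document; each statement's English description precedes it below -/
import Mathlib

section
/- For every context-free grammar G and every positive integer c, the language L(G, ≤ c) = { w ∈ L(G) : dnreg_G(w) ≤ c } is regular. -/
/-- A context-free rule is *regular* (right-linear) if it has the form `A → w` or `A → wB`
for a terminal word `w` and a nonterminal `B`. -/
def IsRegularRule {T N : Type} (r : ContextFreeRule T N) : Prop :=
  (∃ w : List T, r.output = w.map Symbol.terminal) ∨
  (∃ w : List T, ∃ B : N, r.output = w.map Symbol.terminal ++ [Symbol.nonterminal B])

/-- `DerivesN g u v k` : the grammar `g` derives `v` from `u` by a derivation using exactly `k`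
applications of non-regular rules. -/
inductive DerivesN (g : ContextFreeGrammar T) :
    List (Symbol T g.NT) → List (Symbol T g.NT) → ℕ → Prop
  | refl (u : List (Symbol T g.NT)) : DerivesN g u u 0
  | regStep {u v w : List (Symbol T g.NT)} {k : ℕ} (r : ContextFreeRule T g.NT)
      (hr : r ∈ g.rules) (hreg : IsRegularRule r) (huv : r.Rewrites u v)
      (hvw : DerivesN g v w k) : DerivesN g u w k
  | nonregStep {u v w : List (Symbol T g.NT)} {k : ℕ} (r : ContextFreeRule T g.NT)
      (hr : r ∈ g.rules) (hreg : ¬ IsRegularRule r) (huv : r.Rewrites u v)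
      (hvw : DerivesN g v w k) : DerivesN g u w (k + 1)

/-- The degree of non-regularity of a terminal word: the minimal number of applications of
non-regular rules over all derivations of the word (`0` if there is no derivation, since in `ℕ`
the infimum of the empty set is `0`). -/
noncomputable def dnregWord (g : ContextFreeGrammar T) (w : List T) : ℕ :=
  sInf {k | DerivesN g [Symbol.nonterminal g.initial] (w.map Symbol.terminal) k}

/-- The degree of non-regularity of the grammar: the maximum of `dnregWord` over words of
length `n`. -/
noncomputable def dnregFun (g : ContextFreeGrammar T) (n : ℕ) : ℕ :=
  sSup {m | ∃ w : List T, w.length = n ∧ dnregWord g w = m}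

/-- `f ∈ O(h)` for `ℕ`-valued functions. -/
def InO (f h : ℕ → ℕ) : Prop := ∃ c : ℕ, ∀ n, f n ≤ c * h n + c

/-- `f ∈ Ω(n)`: there is a rational constant `1/c > 0` with `f n ≥ n/c` for infinitely many `n`. -/
def InOmegaLinear (f : ℕ → ℕ) : Prop := ∃ c : ℕ, 0 < c ∧ ∀ m : ℕ, ∃ n ≥ m, n ≤ c * f n

/-- The class `DNREG(h)` of languages generated by some context-free grammar whose degree of
non-regularity is in `O(h)`. -/
def DNREG (T : Type) (h : ℕ → ℕ) : Set (Language T) :=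
  {L | ∃ g : ContextFreeGrammar T, g.language = L ∧ InO (dnregFun g) h}

namespace AuxCFG

variable {T : Type} {g : ContextFreeGrammar T}

/-- `DerivesN` with a total step count as well. -/
inductive DerivesNL (g : ContextFreeGrammar T) :
    List (Symbol T g.NT) → List (Symbol T g.NT) → ℕ → ℕ → Prop
  | refl (u : List (Symbol T g.NT)) : DerivesNL g u u 0 0
  | regStep {u v w : List (Symbol T g.NT)} {k n : ℕ} (r : ContextFreeRule T g.NT)
      (hr : r ∈ g.rules) (hreg : IsRegularRule r) (huv : r.Rewrites u v)
      (hvw : DerivesNL g v w k n) : DerivesNL g u w k (n + 1)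
  | nonregStep {u v w : List (Symbol T g.NT)} {k n : ℕ} (r : ContextFreeRule T g.NT)
      (hr : r ∈ g.rules) (hreg : ¬ IsRegularRule r) (huv : r.Rewrites u v)
      (hvw : DerivesNL g v w k n) : DerivesNL g u w (k + 1) (n + 1)

theorem derivesN_iff_derivesNL {u v : List (Symbol T g.NT)} {k : ℕ} :
    DerivesN g u v k ↔ ∃ n, DerivesNL g u v k n := by
  constructor
  · intro h
    induction h with
    | refl u => exact ⟨0, .refl u⟩
    | regStep r hr hreg huv _ ih => obtain ⟨n, hn⟩ := ih; exact ⟨n + 1, .regStep r hr hreg huv hn⟩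
    | nonregStep r hr hreg huv _ ih =>
        obtain ⟨n, hn⟩ := ih; exact ⟨n + 1, .nonregStep r hr hreg huv hn⟩
  · rintro ⟨n, h⟩
    induction h with
    | refl u => exact .refl u
    | regStep r hr hreg huv _ ih => exact .regStep r hr hreg huv ih
    | nonregStep r hr hreg huv _ ih => exact .nonregStep r hr hreg huv ih

theorem _root_.DerivesN.toDerives {u v : List (Symbol T g.NT)} {k : ℕ} (h : DerivesN g u v k) :
    g.Derives u v := by
  induction h with
  | refl u => exact ContextFreeGrammar.Derives.refl u
  | regStep r hr _ huv _ ih => exact ContextFreeGrammar.Produces.trans_derives ⟨r, hr, huv⟩ ih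
  | nonregStep r hr _ huv _ ih => exact ContextFreeGrammar.Produces.trans_derives ⟨r, hr, huv⟩ ih

theorem Derives.toDerivesN {u v : List (Symbol T g.NT)} (h : g.Derives u v) :
    ∃ k, DerivesN g u v k := by
  induction h using Relation.ReflTransGen.head_induction_on with
  | refl => exact ⟨0, .refl v⟩
  | head hp _ ih =>
    obtain ⟨r, hr, huv⟩ := hp
    obtain ⟨k, hk⟩ := ih
    by_cases hreg : IsRegularRule r
    · exact ⟨k, .regStep r hr hreg huv hk⟩
    · exact ⟨k + 1, .nonregStep r hr hreg huv hk⟩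

theorem _root_.DerivesN.append_left {u v : List (Symbol T g.NT)} {k : ℕ}
    (h : DerivesN g u v k) (p : List (Symbol T g.NT)) : DerivesN g (p ++ u) (p ++ v) k := by
  induction h with
  | refl u => exact .refl _
  | regStep r hr hreg huv _ ih => exact .regStep r hr hreg (huv.append_left p) ih
  | nonregStep r hr hreg huv _ ih => exact .nonregStep r hr hreg (huv.append_left p) ih

theorem DerivesNL.trans {u v w : List (Symbol T g.NT)} {k₁ n₁ k₂ n₂ : ℕ}
    (h1 : DerivesNL g u v k₁ n₁) (h2 : DerivesNL g v w k₂ n₂) :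
    DerivesNL g u w (k₁ + k₂) (n₁ + n₂) := by
  induction h1 with
  | refl u => simpa using h2
  | regStep r hr hreg huv _ ih =>
    rw [Nat.add_right_comm]
    exact .regStep r hr hreg huv (ih h2)
  | @nonregStep _ _ _ k n r hr hreg huv _ ih =>
    have h3 := DerivesNL.nonregStep r hr hreg huv (ih h2)
    have e1 : k + 1 + k₂ = k + k₂ + 1 := by omega
    have e2 : n + 1 + n₂ = n + n₂ + 1 := by omega
    rw [e1, e2]; exact h3

theorem DerivesNL.append_left_ctx {u v : List (Symbol T g.NT)} {k n : ℕ}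
    (h : DerivesNL g u v k n) (p : List (Symbol T g.NT)) :
    DerivesNL g (p ++ u) (p ++ v) k n := by
  induction h with
  | refl u => exact .refl _
  | regStep r hr hreg huv _ ih => exact .regStep r hr hreg (huv.append_left p) ih
  | nonregStep r hr hreg huv _ ih => exact .nonregStep r hr hreg (huv.append_left p) ih

theorem DerivesNL.append_right_ctx {u v : List (Symbol T g.NT)} {k n : ℕ}
    (h : DerivesNL g u v k n) (p : List (Symbol T g.NT)) :
    DerivesNL g (u ++ p) (v ++ p) k n := by
  induction h with
  | refl u => exact .refl _
  | regStep r hr hreg huv _ ih => exact .regStep r hr hreg (huv.append_right p) ih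
  | nonregStep r hr hreg huv _ ih => exact .nonregStep r hr hreg (huv.append_right p) ih

theorem DerivesNL.append {u₁ v₁ u₂ v₂ : List (Symbol T g.NT)} {k₁ n₁ k₂ n₂ : ℕ}
    (h1 : DerivesNL g u₁ v₁ k₁ n₁) (h2 : DerivesNL g u₂ v₂ k₂ n₂) :
    DerivesNL g (u₁ ++ u₂) (v₁ ++ v₂) (k₁ + k₂) (n₁ + n₂) :=
  (h1.append_right_ctx u₂).trans (h2.append_left_ctx v₁)

theorem DerivesNL.of_terminal {w : List T} {v : List (Symbol T g.NT)} {k n : ℕ}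
    (h : DerivesNL g (w.map Symbol.terminal) v k n) :
    v = w.map Symbol.terminal ∧ k = 0 ∧ n = 0 := by
  cases h with
  | refl => exact ⟨rfl, rfl, rfl⟩
  | regStep r hr hreg huv hvw =>
    exfalso
    obtain ⟨p, q, hpq, -⟩ := huv.exists_parts
    have : Symbol.nonterminal r.input ∈ w.map Symbol.terminal := by
      rw [hpq]; simp
    simp at this
  | nonregStep r hr hreg huv hvw =>
    exfalso
    obtain ⟨p, q, hpq, -⟩ := huv.exists_parts
    have : Symbol.nonterminal r.input ∈ w.map Symbol.terminal := by
      rw [hpq]; simp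
    simp at this

theorem rewrites_singleton {N : Type} {r : ContextFreeRule T N} {B : N}
    {v : List (Symbol T N)} (h : r.Rewrites [Symbol.nonterminal B] v) :
    r.input = B ∧ v = r.output := by
  obtain ⟨p, q, hpq, hv⟩ := h.exists_parts
  have hl := congrArg List.length hpq
  simp only [List.length_append, List.length_singleton] at hl
  have hp : p = [] := List.eq_nil_of_length_eq_zero (by omega)
  have hq : q = [] := List.eq_nil_of_length_eq_zero (by omega)
  subst hp; subst hq
  simp only [List.nil_append, List.append_nil, List.cons.injEq,
    Symbol.nonterminal.injEq] at hpq
  simp only [List.append_nil, List.nil_append] at hv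
  exact ⟨hpq.1.symm, hv⟩

theorem rewrites_append_cases {N : Type} {r : ContextFreeRule T N}
    {α β v : List (Symbol T N)} (h : r.Rewrites (α ++ β) v) :
    (∃ α', r.Rewrites α α' ∧ v = α' ++ β) ∨ (∃ β', r.Rewrites β β' ∧ v = α ++ β') := by
  induction α generalizing v with
  | nil => exact Or.inr ⟨v, by simpa using h, rfl⟩
  | cons x α ih =>
    cases h with
    | head s => exact Or.inl ⟨r.output ++ α, ContextFreeRule.Rewrites.head α, by simp⟩
    | cons x hrs =>
      rcases ih hrs with ⟨α', hα, rfl⟩ | ⟨β', hβ, rfl⟩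
      · exact Or.inl ⟨x :: α', hα.cons x, by simp⟩
      · exact Or.inr ⟨β', hβ, by simp⟩

theorem derivesNL_split_aux {u x : List (Symbol T g.NT)} {k n : ℕ}
    (h : DerivesNL g u x k n) : ∀ α β, u = α ++ β →
    ∃ x₁ x₂ k₁ k₂ n₁ n₂, x = x₁ ++ x₂ ∧ k = k₁ + k₂ ∧ n = n₁ + n₂ ∧
      DerivesNL g α x₁ k₁ n₁ ∧ DerivesNL g β x₂ k₂ n₂ := by
    induction h with
    | refl u =>
      rintro α β rfl
      exact ⟨α, β, 0, 0, 0, 0, rfl, rfl, rfl, .refl α, .refl β⟩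
    | regStep r hr hreg huv _ ih =>
      rintro α β rfl
      rcases rewrites_append_cases huv with ⟨α', hα, rfl⟩ | ⟨β', hβ, rfl⟩
      · obtain ⟨x₁, x₂, k₁, k₂, n₁, n₂, hx, hk, hn, hd1, hd2⟩ := ih α' β rfl
        exact ⟨x₁, x₂, k₁, k₂, n₁ + 1, n₂, hx, hk, by omega, .regStep r hr hreg hα hd1, hd2⟩
      · obtain ⟨x₁, x₂, k₁, k₂, n₁, n₂, hx, hk, hn, hd1, hd2⟩ := ih α β' rfl
        exact ⟨x₁, x₂, k₁, k₂, n₁, n₂ + 1, hx, hk, by omega, hd1, .regStep r hr hreg hβ hd2⟩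
    | nonregStep r hr hreg huv _ ih =>
      rintro α β rfl
      rcases rewrites_append_cases huv with ⟨α', hα, rfl⟩ | ⟨β', hβ, rfl⟩
      · obtain ⟨x₁, x₂, k₁, k₂, n₁, n₂, hx, hk, hn, hd1, hd2⟩ := ih α' β rfl
        exact ⟨x₁, x₂, k₁ + 1, k₂, n₁ + 1, n₂, hx, by omega, by omega,
          .nonregStep r hr hreg hα hd1, hd2⟩
      · obtain ⟨x₁, x₂, k₁, k₂, n₁, n₂, hx, hk, hn, hd1, hd2⟩ := ih α β' rfl
        exact ⟨x₁, x₂, k₁, k₂ + 1, n₁, n₂ + 1, hx, by omega, by omega, hd1,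
          .nonregStep r hr hreg hβ hd2⟩

theorem DerivesNL.split {α β x : List (Symbol T g.NT)} {k n : ℕ}
    (h : DerivesNL g (α ++ β) x k n) :
    ∃ x₁ x₂ k₁ k₂ n₁ n₂, x = x₁ ++ x₂ ∧ k = k₁ + k₂ ∧ n = n₁ + n₂ ∧
      DerivesNL g α x₁ k₁ n₁ ∧ DerivesNL g β x₂ k₂ n₂ :=
  derivesNL_split_aux h α β rfl

end AuxCFG


namespace AuxTrace
variable {α : Type*} {σ : Type*}

/-- A run of an εNFA from one state to another consuming a word. -/
inductive Trace (M : εNFA α σ) : σ → List α → σ → Prop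
  | refl (q : σ) : Trace M q [] q
  | eps {q q' q'' : σ} {w : List α} (h : q' ∈ M.step q none) (ht : Trace M q' w q'') :
      Trace M q w q''
  | read {q q' q'' : σ} {a : α} {w : List α} (h : q' ∈ M.step q (some a))
      (ht : Trace M q' w q'') : Trace M q (a :: w) q''

theorem Trace.trans {M : εNFA α σ} {q t q'' : σ} {u v : List α}
    (h1 : Trace M q u t) (h2 : Trace M t v q'') : Trace M q (u ++ v) q'' := by
  induction h1 with
  | refl => simpa using h2
  | eps h _ ih => exact .eps h (ih h2)
  | read h _ ih => exact .read h (ih h2)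

theorem trace_of_εClosure {M : εNFA α σ} {S : Set σ} {t : σ} (h : t ∈ M.εClosure S) :
    ∃ q ∈ S, Trace M q [] t := by
  induction h with
  | base s hs => exact ⟨s, hs, .refl s⟩
  | step s t ht _ ih =>
    obtain ⟨q, hq, htr⟩ := ih
    exact ⟨q, hq, by simpa using htr.trans (Trace.eps ht (.refl t))⟩

theorem trace_of_foldl {M : εNFA α σ} {w : List α} {X : Set σ} {q'' : σ}
    (h : q'' ∈ List.foldl M.stepSet X w) : ∃ q ∈ X, Trace M q w q'' := by
  induction w generalizing X with
  | nil => exact ⟨q'', h, .refl q''⟩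
  | cons a w ih =>
    rw [List.foldl_cons] at h
    obtain ⟨q1, hq1, htr⟩ := ih h
    rw [εNFA.mem_stepSet_iff] at hq1
    obtain ⟨t, ht, hq1⟩ := hq1
    obtain ⟨q0, hq0, htr0⟩ := trace_of_εClosure hq1
    exact ⟨t, ht, .read hq0 (by simpa using htr0.trans htr)⟩

theorem trace_of_evalFrom {M : εNFA α σ} {w : List α} {S : Set σ} {q'' : σ}
    (h : q'' ∈ M.evalFrom S w) : ∃ q ∈ S, Trace M q w q'' := by
  obtain ⟨q1, hq1, htr⟩ := trace_of_foldl h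
  obtain ⟨q, hq, htr0⟩ := trace_of_εClosure hq1
  exact ⟨q, hq, by simpa using htr0.trans htr⟩

theorem εClosure_mono {M : εNFA α σ} {S S' : Set σ} (h : S ⊆ M.εClosure S') :
    M.εClosure S ⊆ M.εClosure S' := by
  intro t ht
  induction ht with
  | base s hs => exact h hs
  | step s t hstep _ ih => exact εNFA.εClosure.step s t hstep ih

theorem stepSet_mono {M : εNFA α σ} {S S' : Set σ} (h : S ⊆ S') (a : α) :
    M.stepSet S a ⊆ M.stepSet S' a := by
  intro t ht
  rw [εNFA.mem_stepSet_iff] at ht ⊢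
  obtain ⟨s, hs, hts⟩ := ht
  exact ⟨s, h hs, hts⟩

theorem foldl_stepSet_mono {M : εNFA α σ} {S S' : Set σ} (h : S ⊆ S') (w : List α) :
    List.foldl M.stepSet S w ⊆ List.foldl M.stepSet S' w := by
  induction w generalizing S S' with
  | nil => exact h
  | cons a w ih => exact ih (stepSet_mono h a)

theorem evalFrom_of_trace {M : εNFA α σ} {q q'' : σ} {w : List α} (h : Trace M q w q'') :
    q'' ∈ M.evalFrom {q} w := by
  induction h with
  | refl q => exact M.subset_εClosure {q} rfl
  | @eps q q' qf w hstep _ ih =>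
    refine foldl_stepSet_mono (M := M) (S := M.εClosure {q'}) ?_ w ih
    apply εClosure_mono
    intro x hx
    rcases hx with rfl
    exact εNFA.εClosure.step q x hstep (M.subset_εClosure {q} rfl)
  | @read q q' qf a w hstep _ ih =>
    show qf ∈ List.foldl M.stepSet (M.εClosure {q}) (a :: w)
    rw [List.foldl_cons]
    refine foldl_stepSet_mono (M := M) (S := M.εClosure {q'}) ?_ w ih
    intro x hx
    rw [εNFA.mem_stepSet_iff]
    refine ⟨q, M.subset_εClosure {q} rfl, ?_⟩
    exact εClosure_mono (by intro y hy; rcases hy with rfl; exact M.subset_εClosure _ hstep) hx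

theorem mem_accepts_iff_trace {M : εNFA α σ} {w : List α} :
    w ∈ M.accepts ↔ ∃ q ∈ M.start, ∃ q' ∈ M.accept, Trace M q w q' := by
  constructor
  · rintro ⟨S, hacc, hev⟩
    obtain ⟨q, hq, htr⟩ := trace_of_evalFrom hev
    exact ⟨q, hq, S, hacc, htr⟩
  · rintro ⟨q, hq, q', hacc, htr⟩
    refine ⟨q', hacc, ?_⟩
    have h1 := evalFrom_of_trace htr
    refine foldl_stepSet_mono (M := M) (S := M.εClosure {q}) ?_ w h1
    exact εClosure_mono (by intro x hx; rcases hx with rfl; exact M.subset_εClosure _ hq)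

end AuxTrace

namespace AuxCFG

variable {T : Type}

/-- Is a symbol a terminal? -/
def isT {N : Type} : Symbol T N → Bool
  | .terminal _ => true
  | .nonterminal _ => false

/-- Number of symbols strictly after the first nonterminal. -/
def dfn {N : Type} (α : List (Symbol T N)) : ℕ := ((α.dropWhile isT).drop 1).length

@[simp] lemma dfn_nil {N : Type} : dfn ([] : List (Symbol T N)) = 0 := rfl

@[simp] lemma dfn_term_cons {N : Type} (t : T) (β : List (Symbol T N)) :
    dfn (Symbol.terminal t :: β) = dfn β := by
  simp [dfn, List.dropWhile_cons, isT]

@[simp] lemma dfn_nonterm_cons {N : Type} (B : N) (β : List (Symbol T N)) :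
    dfn (Symbol.nonterminal B :: β) = β.length := by
  simp [dfn, List.dropWhile_cons, isT]

lemma dfn_map_append {N : Type} (w : List T) (γ : List (Symbol T N)) :
    dfn (w.map Symbol.terminal ++ γ) = dfn γ := by
  induction w with
  | nil => simp
  | cons t w ih => simpa using ih

lemma dfn_le {N : Type} (α : List (Symbol T N)) : dfn α ≤ α.length := by
  have h1 : ((α.dropWhile isT).drop 1).length ≤ (α.dropWhile isT).length := by
    rw [List.length_drop]; omega
  exact le_trans h1 (List.Sublist.length_le (List.dropWhile_sublist _))

lemma nonterminal_ne_map_terminal {N : Type} (B : N) (w : List T) :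
    [Symbol.nonterminal B] ≠ w.map Symbol.terminal := by
  cases w <;> simp

variable (g : ContextFreeGrammar T) (c : ℕ)

/-- Maximal length of a rule output. -/
noncomputable def maxOut : ℕ := g.rules.sup fun r => r.output.length

/-- The finitely many symbols that can occur in a derivation. -/
def symSet : Set (Symbol T g.NT) :=
  insert (Symbol.nonterminal g.initial) {s | ∃ r ∈ g.rules, s ∈ r.output}

lemma symSet_finite : (symSet g).Finite := by
  refine Set.Finite.insert _ ?_
  have he : {s : Symbol T g.NT | ∃ r ∈ g.rules, s ∈ r.output} =
      ⋃ r ∈ (g.rules : Set (ContextFreeRule T g.NT)), {s | s ∈ r.output} := by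
    ext s; simp
  rw [he]
  exact g.rules.finite_toSet.biUnion fun r _ => r.output.finite_toSet

/-- Length bound on states. -/
noncomputable def bound : ℕ := (c + 1) * maxOut g + maxOut g + 1

/-- The (finite) state set of the automaton. -/
def Stat : Set (List (Symbol T g.NT) × ℕ) :=
  {p | (∀ s ∈ p.1, s ∈ symSet g) ∧ p.1.length ≤ bound g c ∧ p.2 ≤ c}

lemma map_pmap_val {N : Type*} (A : Set N) (l : List N) (H : ∀ s ∈ l, s ∈ A) :
    (l.pmap (fun s hs => (⟨s, hs⟩ : A)) H).map Subtype.val = l := by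
  induction l with
  | nil => rfl
  | cons a l ihl => simp [List.pmap, ihl]

lemma stat_finite : (Stat g c).Finite := by
  haveI : Finite (symSet g) := (symSet_finite g).to_subtype
  have hfin : ((fun l : List (symSet g) => l.map Subtype.val) ''
      {l | l.length ≤ bound g c}).Finite :=
    (List.finite_length_le _ _).image _
  refine Set.Finite.subset (hfin.prod (Set.finite_Iic c)) ?_
  rintro ⟨l, b⟩ ⟨hsym, hlen, hbud⟩
  refine ⟨⟨l.pmap (fun s hs => (⟨s, hs⟩ : symSet g)) hsym, ?_, ?_⟩, hbud⟩
  · simpa using hlen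
  · show (l.pmap (fun s hs => (⟨s, hs⟩ : symSet g)) hsym).map Subtype.val = l
    exact map_pmap_val (N := Symbol T g.NT) (symSet g) l
      (show ∀ s ∈ l, s ∈ symSet g from hsym)

lemma le_bound {b x : ℕ} (hb : b ≤ c) (hx : x ≤ (c + 1 - b) * maxOut g + maxOut g + 1) :
    x ≤ bound g c := by
  refine hx.trans ?_
  have hm : (c + 1 - b) * maxOut g ≤ (c + 1) * maxOut g :=
    Nat.mul_le_mul_right _ (by omega)
  exact Nat.add_le_add_right (Nat.add_le_add_right hm _) _

/-- The εNFA accepting `L(g, ≤ c)`. -/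
def auto : εNFA T ↥(Stat g c) where
  step := fun q o => match o with
    | none => {q' | ∃ r ∈ g.rules, ∃ β, q.val.1 = Symbol.nonterminal r.input :: β ∧
        q'.val.1 = r.output ++ β ∧
        ((IsRegularRule r ∧ q'.val.2 = q.val.2) ∨ (¬ IsRegularRule r ∧ q'.val.2 + 1 = q.val.2))}
    | some t => {q' | q.val.1 = Symbol.terminal t :: q'.val.1 ∧ q'.val.2 = q.val.2}
  start := {q | q.val = ([Symbol.nonterminal g.initial], c)}
  accept := {q | q.val.1 = []}

theorem trace_sound {w : List T} {q q' : ↥(Stat g c)}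
    (h : AuxTrace.Trace (auto g c) q w q') (hq' : q'.val.1 = []) :
    ∃ k, k + q'.val.2 ≤ q.val.2 ∧ DerivesN g q.val.1 (w.map Symbol.terminal) k := by
  induction h with
  | refl q =>
    refine ⟨0, by omega, ?_⟩
    rw [show q.val.1 = [] from hq']
    exact .refl []
  | @eps q q1 qf w hstep _ ih =>
    obtain ⟨r, hr, β, hq1, hq1', hbud⟩ := hstep
    obtain ⟨k, hk, hd⟩ := ih hq'
    rw [hq1'] at hd
    have hrw : r.Rewrites q.val.1 (r.output ++ β) := by
      rw [hq1]; exact ContextFreeRule.Rewrites.head β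
    rcases hbud with ⟨hreg, hb⟩ | ⟨hreg, hb⟩
    · exact ⟨k, by omega, .regStep r hr hreg hrw hd⟩
    · exact ⟨k + 1, by omega, .nonregStep r hr hreg hrw hd⟩
  | @read q q1 qf t w hstep _ ih =>
    obtain ⟨hq1, hb⟩ := hstep
    obtain ⟨k, hk, hd⟩ := ih hq'
    refine ⟨k, by omega, ?_⟩
    rw [hq1]
    simpa using hd.append_left [Symbol.terminal t]

theorem trace_complete : ∀ (N : ℕ) (w : List T) (k b n : ℕ) (α : List (Symbol T g.NT)),
    n + w.length ≤ N → DerivesNL g α (w.map Symbol.terminal) k n → k ≤ b → b ≤ c →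
    (∀ s ∈ α, s ∈ symSet g) → dfn α ≤ (c + 1 - b) * maxOut g →
    α.length ≤ (c + 1 - b) * maxOut g + maxOut g + 1 →
    ∃ (b' : ℕ) (h1 : (α, b) ∈ Stat g c) (h2 : (([] : List (Symbol T g.NT)), b') ∈ Stat g c),
      AuxTrace.Trace (auto g c) ⟨(α, b), h1⟩ w ⟨([], b'), h2⟩ := by
  intro N
  induction N with
  | zero =>
    intro w k b n α hN h hk hb hsym hd hlen
    have hw : w = [] := by
      have := List.length_eq_zero_iff.mp (by omega : w.length = 0); exact this
    have hn : n = 0 := by omega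
    subst hw
    subst hn
    cases h with
    | refl =>
      have h1 : ((List.map Symbol.terminal [] : List (Symbol T g.NT)), b) ∈ Stat g c := by
        refine ⟨by simp, by simp, hb⟩
      exact ⟨b, h1, by simpa using h1, by simpa using AuxTrace.Trace.refl _⟩
  | succ N ih =>
    intro w k b n α hN h hk hb hsym hd hlen
    match α, h with
    | [], h =>
      obtain ⟨hv, hk0, hn0⟩ := DerivesNL.of_terminal (w := []) (by simpa using h)
      have hw : w = [] := by simpa using hv.symm
      subst hw
      have h1 : (([] : List (Symbol T g.NT)), b) ∈ Stat g c := ⟨by simp, by simp, hb⟩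
      exact ⟨b, h1, h1, AuxTrace.Trace.refl _⟩
    | Symbol.terminal t :: β, h =>
      have h' : DerivesNL g ([Symbol.terminal t] ++ β) (w.map Symbol.terminal) k n := by
        simpa using h
      obtain ⟨x₁, x₂, k₁, k₂, n₁, n₂, hx, hk', hn', h1, h2⟩ := h'.split
      obtain ⟨hx1, hk1, hn1⟩ := DerivesNL.of_terminal (w := [t]) (by simpa using h1)
      subst hx1 hk1 hn1
      cases w with
      | nil => simp at hx
      | cons t' w' =>
        simp only [List.map_cons, List.singleton_append, List.cons_append,
          List.nil_append] at hx
        obtain ⟨h1t, hx2⟩ := List.cons_eq_cons.mp hx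
        have htt : t' = t := Symbol.terminal.inj h1t
        subst htt
        have hm : n₂ + w'.length ≤ N := by
          simp only [List.length_cons] at hN; omega
        have hder : DerivesNL g β (List.map Symbol.terminal w') k₂ n₂ := by
          rw [hx2]; exact h2
        have hdb : dfn β ≤ (c + 1 - b) * maxOut g := by
          rw [dfn_term_cons] at hd; exact hd
        have hlb : β.length ≤ (c + 1 - b) * maxOut g + maxOut g + 1 := by
          simp only [List.length_cons] at hlen; omega
        have hrec := ih w' k₂ b n₂ β hm hder (by omega) hb
          (fun s hs => hsym s (List.mem_cons_of_mem _ hs)) hdb hlb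
        obtain ⟨b', hS1, hS2, htr⟩ := hrec
        have hstat : ((Symbol.terminal t' :: β : List (Symbol T g.NT)), b) ∈ Stat g c :=
          ⟨hsym, le_bound g c hb hlen, hb⟩
        refine ⟨b', hstat, hS2, ?_⟩
        exact AuxTrace.Trace.read (q' := ⟨(β, b), hS1⟩) (a := t')
          (show _ ∈ (auto g c).step ⟨(Symbol.terminal t' :: β, b), hstat⟩ (some t')
            from ⟨rfl, rfl⟩) htr
    | Symbol.nonterminal B :: β, h =>
      have h' : DerivesNL g ([Symbol.nonterminal B] ++ β) (w.map Symbol.terminal) k n := by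
        simpa using h
      obtain ⟨x₁, x₂, k₁, k₂, n₁, n₂, hx, hk', hn', h1, h2⟩ := h'.split
      have hx1t : x₁ = (w.take x₁.length).map Symbol.terminal := by
        have h0 := congrArg (fun l => List.take x₁.length l) hx
        simp only [List.take_left] at h0
        rw [List.map_take]
        exact h0.symm
      have hβlen : β.length ≤ (c + 1 - b) * maxOut g := by
        rw [dfn_nonterm_cons] at hd; exact hd
      cases h1 with
      | refl => exact absurd hx1t (nonterminal_ne_map_terminal B _)
      | @regStep _ v _ k₁ n₁' r hr hreg huv hvw =>
        obtain ⟨hi, hv⟩ := rewrites_singleton huv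
        subst hv
        have h3 : DerivesNL g (r.output ++ β) (w.map Symbol.terminal) (k₁ + k₂) (n₁' + n₂) := by
          rw [hx]; exact hvw.append h2
        have hMout : r.output.length ≤ maxOut g := Finset.le_sup (f := fun r : ContextFreeRule T g.NT => r.output.length) hr
        have hdfn' : dfn (r.output ++ β) ≤ (c + 1 - b) * maxOut g := by
          rcases hreg with ⟨w', hw'⟩ | ⟨w', B', hw'⟩
          · rw [hw', dfn_map_append]
            exact le_trans (dfn_le β) hβlen
          · rw [hw', List.append_assoc, dfn_map_append, List.singleton_append,
              dfn_nonterm_cons]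
            exact hβlen
        have hlen' : (r.output ++ β).length ≤ (c + 1 - b) * maxOut g + maxOut g + 1 := by
          rw [List.length_append]; omega
        have hsym' : ∀ s ∈ r.output ++ β, s ∈ symSet g := by
          intro s hs
          rcases List.mem_append.mp hs with hs | hs
          · exact Set.mem_insert_iff.mpr (Or.inr ⟨r, hr, hs⟩)
          · exact hsym s (List.mem_cons_of_mem _ hs)
        have hrec := ih w (k₁ + k₂) b (n₁' + n₂) (r.output ++ β) (by omega) h3
          (by omega) hb hsym' hdfn' hlen'
        obtain ⟨b', hS1, hS2, htr⟩ := hrec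
        have hstat : ((Symbol.nonterminal B :: β : List (Symbol T g.NT)), b) ∈ Stat g c :=
          ⟨hsym, le_bound g c hb hlen, hb⟩
        refine ⟨b', hstat, hS2, ?_⟩
        refine AuxTrace.Trace.eps (q' := ⟨(r.output ++ β, b), hS1⟩)
          (show _ ∈ (auto g c).step _ none from ?_) htr
        exact ⟨r, hr, β, by rw [hi], rfl, Or.inl ⟨hreg, rfl⟩⟩
      | @nonregStep _ v _ k₁' n₁' r hr hreg huv hvw =>
        obtain ⟨hi, hv⟩ := rewrites_singleton huv
        subst hv
        have hb1 : 1 ≤ b := by omega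
        have h3 : DerivesNL g (r.output ++ β) (w.map Symbol.terminal) (k₁' + k₂) (n₁' + n₂) := by
          rw [hx]; exact hvw.append h2
        have hMout : r.output.length ≤ maxOut g := Finset.le_sup (f := fun r : ContextFreeRule T g.NT => r.output.length) hr
        have key : (c + 1 - (b - 1)) * maxOut g = (c + 1 - b) * maxOut g + maxOut g := by
          have he : c + 1 - (b - 1) = (c + 1 - b) + 1 := by omega
          rw [he, Nat.succ_mul]
        have hdfn' : dfn (r.output ++ β) ≤ (c + 1 - (b - 1)) * maxOut g := by
          refine le_trans (dfn_le _) ?_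
          rw [List.length_append, key]; omega
        have hlen' : (r.output ++ β).length ≤ (c + 1 - (b - 1)) * maxOut g + maxOut g + 1 := by
          rw [List.length_append, key]; omega
        have hsym' : ∀ s ∈ r.output ++ β, s ∈ symSet g := by
          intro s hs
          rcases List.mem_append.mp hs with hs | hs
          · exact Set.mem_insert_iff.mpr (Or.inr ⟨r, hr, hs⟩)
          · exact hsym s (List.mem_cons_of_mem _ hs)
        have hrec := ih w (k₁' + k₂) (b - 1) (n₁' + n₂) (r.output ++ β) (by omega) h3
          (by omega) (by omega) hsym' hdfn' hlen'
        obtain ⟨b', hS1, hS2, htr⟩ := hrec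
        have hstat : ((Symbol.nonterminal B :: β : List (Symbol T g.NT)), b) ∈ Stat g c :=
          ⟨hsym, le_bound g c hb hlen, hb⟩
        refine ⟨b', hstat, hS2, ?_⟩
        refine AuxTrace.Trace.eps (q' := ⟨(r.output ++ β, b - 1), hS1⟩)
          (show _ ∈ (auto g c).step _ none from ?_) htr
        exact ⟨r, hr, β, by rw [hi], rfl, Or.inr ⟨hreg, show b - 1 + 1 = b by omega⟩⟩

theorem accepts_eq :
    (auto g c).accepts = {w : List T | w ∈ g.language ∧ dnregWord g w ≤ c} := by
  ext w
  constructor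
  · intro hw
    obtain ⟨q, hq, q', hacc, htr⟩ := AuxTrace.mem_accepts_iff_trace.mp hw
    obtain ⟨k, hk, hd⟩ := trace_sound g c htr hacc
    rw [show q.val.1 = [Symbol.nonterminal g.initial] from congrArg Prod.fst hq] at hd
    have hkc : k ≤ c := by
      have := congrArg Prod.snd hq
      simp only at this
      omega
    constructor
    · rw [ContextFreeGrammar.mem_language_iff]
      exact hd.toDerives
    · exact le_trans (Nat.sInf_le hd) hkc
  · rintro ⟨hl, hd⟩
    have hne : {k | DerivesN g [Symbol.nonterminal g.initial] (w.map Symbol.terminal) k}.Nonempty := by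
      obtain ⟨k, hk⟩ := Derives.toDerivesN ((ContextFreeGrammar.mem_language_iff g w).mp hl)
      exact ⟨k, hk⟩
    have hmem := Nat.sInf_mem hne
    obtain ⟨n, hn⟩ := derivesN_iff_derivesNL.mp hmem
    have hrec := trace_complete g c (n + w.length) w (dnregWord g w) c n
      [Symbol.nonterminal g.initial] le_rfl hn hd le_rfl
      (by intro s hs; simp only [List.mem_singleton] at hs; subst hs
          exact Set.mem_insert _ _)
      (by simp) (by simp [bound])
    obtain ⟨b', hS1, hS2, htr⟩ := hrec
    exact AuxTrace.mem_accepts_iff_trace.mpr ⟨_, rfl, _, rfl, htr⟩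

end AuxCFG

/-- For every context-free grammar `G` and positive integer `c`, the language
`L(G, ≤ c) = { w ∈ L(G) : dnreg_G(w) ≤ c }` is regular. -/
theorem language_le_c_regular (T : Type) (g : ContextFreeGrammar T) (c : ℕ) (hc : 0 < c) :
    Language.IsRegular {w : List T | w ∈ g.language ∧ dnregWord g w ≤ c} := by
  haveI : Finite ↥(AuxCFG.Stat g c) := (AuxCFG.stat_finite g c).to_subtype
  refine ⟨Set ↥(AuxCFG.Stat g c), Fintype.ofFinite _, (AuxCFG.auto g c).toNFA.toDFA, ?_⟩
  rw [NFA.toDFA_correct, εNFA.toNFA_correct, AuxCFG.accepts_eq]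
end

section
/- For every nondeterministic pushdown automaton Γ accepting by final state there exists a pushdown automaton Γ' accepting by empty stack with L(Γ) = L(Γ') and push_{Γ'}(n) ∈ O(push_Γ(n)), and conversely; hence PUSH_λ(f(n)) = PUSH_f(f(n)) for every function f. -/
/-- A (nondeterministic) pushdown automaton with input alphabet `T`. -/
structure PDA (T : Type) where
  /-- States. -/
  Q : Type
  /-- Stack alphabet. -/
  Γ : Type
  [fQ : Fintype Q]
  [fΓ : Fintype Γ]
  /-- Transition function: in a state, reading an optional input letter and the top stack
  symbol, nondeterministically move to a new state, replacing the top symbol by a word. -/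
  δ : Q → Option T → Γ → Set (Q × List Γ)
  fin : ∀ q a Z, (δ q a Z).Finite
  /-- Initial state. -/
  q₀ : Q
  /-- Initial stack symbol. -/
  Z₀ : Γ
  /-- Final states. -/
  F : Set Q

/-- `P.Steps c c' k` : the PDA `P` goes from configuration `c` (state, remaining input, stack)
to configuration `c'` using exactly `k` push moves (moves replacing the top symbol by a word of
length at least `2`). -/
inductive PDA.Steps (P : PDA T) :
    P.Q × List T × List P.Γ → P.Q × List T × List P.Γ → ℕ → Prop
  | refl (c : P.Q × List T × List P.Γ) : Steps P c c 0
  | step {p : P.Q} {w : List T} {γ α : List P.Γ} {c : P.Q × List T × List P.Γ} {Z : P.Γ}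
      {q : P.Q} {k : ℕ} {a : Option T} (h : (p, α) ∈ P.δ q a Z)
      (ih : Steps P (p, w, α ++ γ) c k) :
      Steps P (q, a.toList ++ w, Z :: γ) c (if 2 ≤ α.length then k + 1 else k)

/-- Acceptance by empty stack (reading the whole input), with `k` push moves. -/
def PDA.AcceptsEmptyN (P : PDA T) (w : List T) (k : ℕ) : Prop :=
  ∃ q : P.Q, P.Steps (P.q₀, w, [P.Z₀]) (q, [], []) k

/-- Acceptance by final state (reading the whole input), with `k` push moves. -/
def PDA.AcceptsFinalN (P : PDA T) (w : List T) (k : ℕ) : Prop :=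
  ∃ q ∈ P.F, ∃ γ : List P.Γ, P.Steps (P.q₀, w, [P.Z₀]) (q, [], γ) k

/-- The language accepted with empty stack. -/
def PDA.langEmpty (P : PDA T) : Language T := {w | ∃ k, P.AcceptsEmptyN w k}

/-- The language accepted with final states. -/
def PDA.langFinal (P : PDA T) : Language T := {w | ∃ k, P.AcceptsFinalN w k}

/-- Push complexity of a word (empty-stack mode): the minimal number of push moves over all
accepting computations (`0` if the word is not accepted). -/
noncomputable def PDA.pushEmptyW (P : PDA T) (w : List T) : ℕ :=
  sInf {k | P.AcceptsEmptyN w k}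

/-- Push complexity of a word (final-state mode). -/
noncomputable def PDA.pushFinalW (P : PDA T) (w : List T) : ℕ :=
  sInf {k | P.AcceptsFinalN w k}

/-- Push complexity function (empty-stack mode): maximum over words of length `n`. -/
noncomputable def PDA.pushEmptyFun (P : PDA T) (n : ℕ) : ℕ :=
  sSup {m | ∃ w : List T, w.length = n ∧ P.pushEmptyW w = m}

/-- Push complexity function (final-state mode). -/
noncomputable def PDA.pushFinalFun (P : PDA T) (n : ℕ) : ℕ :=
  sSup {m | ∃ w : List T, w.length = n ∧ P.pushFinalW w = m}

/-- The class `PUSH_λ(f)` of languages accepted with empty stack by some PDA with push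
complexity in `O(f)`. -/
def PUSHempty (T : Type) (f : ℕ → ℕ) : Set (Language T) :=
  {L | ∃ P : PDA T, P.langEmpty = L ∧ InO (P.pushEmptyFun) f}

/-- The class `PUSH_f(f)` of languages accepted with final states by some PDA with push
complexity in `O(f)`. -/
def PUSHfinal (T : Type) (f : ℕ → ℕ) : Set (Language T) :=
  {L | ∃ P : PDA T, P.langFinal = L ∧ InO (P.pushFinalFun) f}

/-! Each acceptance mode is simulated in the other by running the given automaton above a fresh
bottom-of-stack marker, installed under `Z₀` by one initial push move. When the simulated
automaton accepts (it is in a final state, or the marker surfaces), the simulator may jump to a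
sink state that empties the stack and is its only final state. The simulation makes exactly the
push moves of the simulated computation, so every word costs exactly one push move more, and the
push complexities agree up to `+ 1`. -/

theorem InO.trans {f g h : ℕ → ℕ} (hfg : InO f g) (hgh : InO g h) : InO f h := by
  obtain ⟨c, hc⟩ := hfg
  obtain ⟨d, hd⟩ := hgh
  refine ⟨c * d + c, fun n => ?_⟩
  nlinarith [hc n, Nat.mul_le_mul_left c (hd n)]

theorem sInf_le_sInf_image_add_one (S : Set ℕ) : sInf S ≤ sInf ((· + 1) '' S) := by
  rcases S.eq_empty_or_nonempty with rfl | hS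
  · simp
  · obtain ⟨k, hk, hk'⟩ := Nat.sInf_mem (hS.image (· + 1))
    exact (Nat.sInf_le hk).trans (hk' ▸ Nat.le_succ k)

theorem sInf_image_add_one_le (S : Set ℕ) : sInf ((· + 1) '' S) ≤ sInf S + 1 := by
  rcases S.eq_empty_or_nonempty with rfl | hS
  · simp
  · exact Nat.sInf_le ⟨sInf S, Nat.sInf_mem hS, rfl⟩

theorem sSup_le_sSup_add_one {S S' : Set ℕ} (h : ∀ a ∈ S', ∃ b ∈ S, a ≤ b + 1)
    (h' : ∀ b ∈ S, ∃ a ∈ S', b ≤ a) : sSup S' ≤ sSup S + 1 := by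
  by_cases hS : BddAbove S
  · refine csSup_le' fun a ha => ?_
    obtain ⟨b, hb, hab⟩ := h a ha
    exact hab.trans (Nat.add_le_add_right (le_csSup hS hb) 1)
  · have hS' : ¬ BddAbove S' := fun ⟨M, hM⟩ =>
      hS ⟨M, fun b hb => by
        obtain ⟨a, ha, hba⟩ := h' b hb
        exact hba.trans (hM ha)⟩
    simp [csSup_of_not_bddAbove hS']

theorem setOf_exists_eq_of_iff_add_one {α : Type*} {A B : α → ℕ → Prop}
    (h : ∀ w m, A w m ↔ ∃ k, B w k ∧ m = k + 1) : {w | ∃ m, A w m} = {w | ∃ k, B w k} := by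
  ext w
  simp only [Set.mem_ofPred_eq, h]
  exact ⟨fun ⟨_, k, hk, _⟩ => ⟨k, hk⟩, fun ⟨k, hk⟩ => ⟨k + 1, k, hk, rfl⟩⟩

/-- The two sides are `pushEmptyFun` / `pushFinalFun` with the acceptance relation abstracted. -/
theorem inO_of_iff_add_one {T : Type} {A B : List T → ℕ → Prop}
    (h : ∀ w m, A w m ↔ ∃ k, B w k ∧ m = k + 1) :
    InO (fun n => sSup {m | ∃ w : List T, w.length = n ∧ sInf {k | A w k} = m})
      (fun n => sSup {m | ∃ w : List T, w.length = n ∧ sInf {k | B w k} = m}) := by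
  have hAB : ∀ w, {k | A w k} = (· + 1) '' {k | B w k} := fun w => by
    ext m
    simp only [Set.mem_ofPred_eq, Set.mem_image, h, eq_comm (a := m)]
  refine ⟨1, fun n => ?_⟩
  rw [one_mul]
  apply sSup_le_sSup_add_one
  · rintro _ ⟨w, hw, rfl⟩
    exact ⟨_, ⟨w, hw, rfl⟩, hAB w ▸ sInf_image_add_one_le _⟩
  · rintro _ ⟨w, hw, rfl⟩
    exact ⟨_, ⟨w, hw, rfl⟩, hAB w ▸ sInf_le_sInf_image_add_one _⟩

namespace PDA

attribute [instance] fQ fΓ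

variable {T : Type} {P : PDA T}

theorem Steps.trans {c₁ c₂ c₃ : P.Q × List T × List P.Γ} {k₁ k₂ : ℕ}
    (h₁ : P.Steps c₁ c₂ k₁) (h₂ : P.Steps c₂ c₃ k₂) : P.Steps c₁ c₃ (k₁ + k₂) := by
  induction h₁ with
  | refl => simpa using h₂
  | step h _ ih =>
    convert Steps.step h (ih h₂) using 1
    split_ifs <;> omega

/-- Acceptance decided by the state and the top stack symbol (`none` for the empty stack). -/
def AcceptsByN (P : PDA T) (E : P.Q → Option P.Γ → Prop) (w : List T) (k : ℕ) : Prop :=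
  ∃ q γ, P.Steps (P.q₀, w, [P.Z₀]) (q, [], γ) k ∧ E q γ.head?

theorem acceptsByN_mem_F_iff {w : List T} {k : ℕ} :
    P.AcceptsByN (fun q _ => q ∈ P.F) w k ↔ P.AcceptsFinalN w k :=
  ⟨fun ⟨q, γ, h, hq⟩ => ⟨q, hq, γ, h⟩, fun ⟨q, hq, γ, h⟩ => ⟨q, γ, h, hq⟩⟩

theorem acceptsByN_head_eq_none_iff {w : List T} {k : ℕ} :
    P.AcceptsByN (fun _ X => X = none) w k ↔ P.AcceptsEmptyN w k := by
  simp [AcceptsByN, AcceptsEmptyN]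

/-- `P` run above the bottom marker `none`, after a first move from state `some none`. From a
state `q` with top symbol `X` (the marker when `P`'s stack is empty) such that `E q X`, it may
move to the sink state `none`, which empties the stack. -/
@[reducible] def withBottom (P : PDA T) (E : P.Q → Option P.Γ → Prop) : PDA T where
  Q := Option (Option P.Q)
  Γ := Option P.Γ
  δ q a X :=
    match q, X with
    | some none, none => {x | a = none ∧ x = (some (some P.q₀), [some P.Z₀, none])}
    | some none, some _ => ∅
    | some (some p), some Z =>
        (fun r => (some (some r.1), r.2.map some)) '' P.δ p a Z ∪
          {x | a = none ∧ E p (some Z) ∧ x = (none, [])}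
    | some (some p), none => {x | a = none ∧ E p none ∧ x = (none, [])}
    | none, _ => {x | a = none ∧ x = (none, [])}
  fin q a X := by
    rcases q with _ | _ | p <;> rcases X with _ | Z
    all_goals first
      | exact Set.finite_empty
      | exact (Set.finite_singleton _).subset fun x hx => hx.2
      | exact (Set.finite_singleton _).subset fun x hx => hx.2.2
      | exact ((P.fin p a Z).image _).union ((Set.finite_singleton _).subset fun x hx => hx.2.2)
  q₀ := some none
  Z₀ := none
  F := {none}

variable {E : P.Q → Option P.Γ → Prop}

theorem withBottom_steps_of_steps {c c' : P.Q × List T × List P.Γ} {k : ℕ}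
    (h : P.Steps c c' k) :
    (P.withBottom E).Steps (some (some c.1), c.2.1, c.2.2.map some ++ [none])
      (some (some c'.1), c'.2.1, c'.2.2.map some ++ [none]) k := by
  induction h with
  | refl => exact .refl _
  | @step p w γ α _ Z q _ a h _ ih =>
    have hδ : (some (some p), α.map some) ∈ (P.withBottom E).δ (some (some q)) a (some Z) :=
      Or.inl ⟨(p, α), h, rfl⟩
    simpa using Steps.step (γ := γ.map some ++ [none]) hδ (by simpa using ih)

theorem withBottom_steps_from_sink {c c' : (P.withBottom E).Q × List T × List (P.withBottom E).Γ}
    {k : ℕ} (h : (P.withBottom E).Steps c c' k) (hc : c.1 = none) :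
    c'.1 = none ∧ c'.2.1 = c.2.1 ∧ k = 0 := by
  induction h with
  | refl => exact ⟨hc, rfl, rfl⟩
  | step hδ _ ih =>
    subst hc
    obtain ⟨rfl, hx⟩ := hδ
    obtain ⟨rfl, rfl⟩ := Prod.mk.inj hx
    simpa using ih rfl

theorem withBottom_sink_drain (w : List T) :
    ∀ l : List (Option P.Γ), (P.withBottom E).Steps (none, w, l) (none, w, []) 0
  | [] => .refl _
  | X :: l => by
    have hδ : ((none : Option (Option P.Q)), ([] : List (Option P.Γ))) ∈
        (P.withBottom E).δ none none X := ⟨rfl, rfl⟩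
    exact Steps.step (P := P.withBottom E) (γ := l) hδ (withBottom_sink_drain w l)

theorem withBottom_steps_exit {q : P.Q} {γ : List P.Γ} (hE : E q γ.head?) :
    (P.withBottom E).Steps (some (some q), [], γ.map some ++ [none]) (none, [], []) 0 := by
  cases γ with
  | nil =>
    have hδ : ((none : Option (Option P.Q)), ([] : List (Option P.Γ))) ∈
        (P.withBottom E).δ (some (some q)) none none := ⟨rfl, hE, rfl⟩
    simpa using Steps.step (w := []) (γ := []) hδ (.refl _)
  | cons X γ =>
    have hδ : ((none : Option (Option P.Q)), ([] : List (Option P.Γ))) ∈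
        (P.withBottom E).δ (some (some q)) none (some X) := Or.inr ⟨rfl, hE, rfl⟩
    simpa using Steps.step (w := []) hδ (withBottom_sink_drain [] _)

/-- The marker is popped only by an exit move, so a run ending in the sink or on the empty stack
passes through one. -/
theorem withBottom_steps_inv {c c' : (P.withBottom E).Q × List T × List (P.withBottom E).Γ}
    {k : ℕ} (h : (P.withBottom E).Steps c c' k) {q : P.Q} {w : List T} {γ : List P.Γ}
    (hc : c = (some (some q), w, γ.map some ++ [none])) (hw' : c'.2.1 = [])
    (hc' : c'.1 = none ∨ c'.2.2 = []) :
    ∃ q' γ', P.Steps (q, w, γ) (q', [], γ') k ∧ E q' γ'.head? := by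
  induction h generalizing q w γ with
  | refl =>
    subst hc
    simp at hc'
  | @step p w₁ γ₁ α _ Z _ _ a hδ hrest ih =>
    simp only [Prod.mk.injEq] at hc
    obtain ⟨rfl, rfl, hst⟩ := hc
    cases γ with
    | nil =>
      obtain ⟨rfl, rfl⟩ : Z = none ∧ γ₁ = [] := by simpa using hst
      obtain ⟨rfl, hE, hx⟩ := hδ
      obtain ⟨rfl, rfl⟩ := Prod.mk.inj hx
      obtain ⟨-, hw₁, rfl⟩ := withBottom_steps_from_sink hrest rfl
      obtain rfl : w₁ = [] := hw₁.symm.trans hw'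
      exact ⟨q, [], .refl _, hE⟩
    | cons X γ =>
      obtain ⟨rfl, rfl⟩ : Z = some X ∧ γ₁ = γ.map some ++ [none] := by simpa using hst
      rcases hδ with ⟨⟨p', α'⟩, hδ', hx⟩ | ⟨rfl, hE, hx⟩
      · obtain ⟨rfl, rfl⟩ := Prod.mk.inj hx
        obtain ⟨q', γ', hsteps, hE⟩ := ih (q := p') (w := w₁) (γ := α' ++ γ) (by simp) hw' hc'
        exact ⟨q', γ', by simpa using Steps.step hδ' hsteps, hE⟩
      · obtain ⟨rfl, rfl⟩ := Prod.mk.inj hx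
        obtain ⟨-, hw₁, rfl⟩ := withBottom_steps_from_sink hrest rfl
        obtain rfl : w₁ = [] := hw₁.symm.trans hw'
        exact ⟨q, X :: γ, .refl _, hE⟩

theorem withBottom_steps_of_acceptsByN {w : List T} {k : ℕ} (h : P.AcceptsByN E w k) :
    (P.withBottom E).Steps (some none, w, [none]) (none, [], []) (k + 1) := by
  obtain ⟨q, γ, hsteps, hE⟩ := h
  have hδ : ((some (some P.q₀) : Option (Option P.Q)), [some P.Z₀, none]) ∈
      (P.withBottom E).δ (some none) none none := ⟨rfl, rfl⟩
  have hrun := (withBottom_steps_of_steps (E := E) hsteps).trans (withBottom_steps_exit hE)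
  simpa using Steps.step (w := w) (γ := []) hδ hrun

theorem acceptsByN_of_withBottom_steps {w : List T}
    {c' : (P.withBottom E).Q × List T × List (P.withBottom E).Γ} {m : ℕ}
    (h : (P.withBottom E).Steps (some none, w, [none]) c' m) (hw' : c'.2.1 = [])
    (hc' : c'.1 = none ∨ c'.2.2 = []) : ∃ k, P.AcceptsByN E w k ∧ m = k + 1 := by
  cases h with
  | refl => simp at hc'
  | step hδ hrest =>
    obtain ⟨rfl, hx⟩ := hδ
    obtain ⟨rfl, rfl⟩ := Prod.mk.inj hx
    exact ⟨_, withBottom_steps_inv hrest (q := P.q₀) (γ := [P.Z₀]) (by simp) hw' hc', by simp⟩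

theorem withBottom_acceptsEmptyN_iff {w : List T} {m : ℕ} :
    (P.withBottom E).AcceptsEmptyN w m ↔ ∃ k, P.AcceptsByN E w k ∧ m = k + 1 := by
  constructor
  · rintro ⟨q, h⟩
    exact acceptsByN_of_withBottom_steps h rfl (.inr rfl)
  · rintro ⟨k, hk, rfl⟩
    exact ⟨none, withBottom_steps_of_acceptsByN hk⟩

theorem withBottom_acceptsFinalN_iff {w : List T} {m : ℕ} :
    (P.withBottom E).AcceptsFinalN w m ↔ ∃ k, P.AcceptsByN E w k ∧ m = k + 1 := by
  constructor
  · rintro ⟨q, hq, γ, h⟩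
    exact acceptsByN_of_withBottom_steps h rfl (.inl hq)
  · rintro ⟨k, hk, rfl⟩
    exact ⟨none, rfl, [], withBottom_steps_of_acceptsByN hk⟩

def toEmpty (P : PDA T) : PDA T := P.withBottom fun q _ => q ∈ P.F

def toFinal (P : PDA T) : PDA T := P.withBottom fun _ X => X = none

theorem acceptsEmptyN_toEmpty_iff {w : List T} {m : ℕ} :
    P.toEmpty.AcceptsEmptyN w m ↔ ∃ k, P.AcceptsFinalN w k ∧ m = k + 1 := by
  simp only [toEmpty, withBottom_acceptsEmptyN_iff, acceptsByN_mem_F_iff]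

theorem acceptsFinalN_toFinal_iff {w : List T} {m : ℕ} :
    P.toFinal.AcceptsFinalN w m ↔ ∃ k, P.AcceptsEmptyN w k ∧ m = k + 1 := by
  simp only [toFinal, withBottom_acceptsFinalN_iff, acceptsByN_head_eq_none_iff]

theorem langEmpty_toEmpty (P : PDA T) : P.toEmpty.langEmpty = P.langFinal :=
  setOf_exists_eq_of_iff_add_one fun _ _ => acceptsEmptyN_toEmpty_iff

theorem langFinal_toFinal (P : PDA T) : P.toFinal.langFinal = P.langEmpty :=
  setOf_exists_eq_of_iff_add_one fun _ _ => acceptsFinalN_toFinal_iff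

theorem inO_pushEmptyFun_toEmpty (P : PDA T) : InO P.toEmpty.pushEmptyFun P.pushFinalFun :=
  inO_of_iff_add_one fun _ _ => acceptsEmptyN_toEmpty_iff

theorem inO_pushFinalFun_toFinal (P : PDA T) : InO P.toFinal.pushFinalFun P.pushEmptyFun :=
  inO_of_iff_add_one fun _ _ => acceptsFinalN_toFinal_iff

end PDA

/-- Final-state acceptance and empty-stack acceptance are interconvertible preserving the order
of magnitude of the push complexity; hence `PUSH_λ(f) = PUSH_f(f)` for every `f`. -/
theorem push_empty_eq_push_final (T : Type) :
    (∀ P : PDA T, ∃ P' : PDA T, P'.langEmpty = P.langFinal ∧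
        InO (P'.pushEmptyFun) (P.pushFinalFun)) ∧
    (∀ P : PDA T, ∃ P' : PDA T, P'.langFinal = P.langEmpty ∧
        InO (P'.pushFinalFun) (P.pushEmptyFun)) ∧
    (∀ f : ℕ → ℕ, PUSHempty T f = PUSHfinal T f) := by
  refine ⟨fun P => ⟨P.toEmpty, P.langEmpty_toEmpty, P.inO_pushEmptyFun_toEmpty⟩,
    fun P => ⟨P.toFinal, P.langFinal_toFinal, P.inO_pushFinalFun_toFinal⟩, fun f => ?_⟩
  ext L
  constructor
  · rintro ⟨P, rfl, hP⟩
    exact ⟨P.toFinal, P.langFinal_toFinal, P.inO_pushFinalFun_toFinal.trans hP⟩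
  · rintro ⟨P, rfl, hP⟩
    exact ⟨P.toEmpty, P.langEmpty_toEmpty, P.inO_pushEmptyFun_toEmpty.trans hP⟩
end

section
/- There exists an extended finite automaton A over the group ℤ × ℤ₂ such that L(A) is not regular and gmc_A(n) ∈ O(√n). -/
open scoped Classical

/-- An extended finite automaton (EFA) over a group `M`, with input alphabet `V`:
a finite automaton whose transitions additionally multiply a group register by elements
of `M`. -/
structure EFA (V M : Type) [Group M] where
  /-- States. -/
  Q : Type
  [fQ : Fintype Q]
  /-- Transition function: finitely many (state, group element) pairs per state and letter. -/
  δ : Q → V → Set (Q × M)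
  fin : ∀ q a, (δ q a).Finite
  /-- Initial state. -/
  q₀ : Q
  /-- Final states. -/
  F : Set Q

variable {V M : Type} [Group M]

/-- `A.Steps c c' k` : the EFA `A` goes from configuration `c` (state, remaining input,
register) to configuration `c'` using exactly `k` transitions whose group element is not the
identity. -/
inductive EFA.Steps (A : EFA V M) :
    A.Q × List V × M → A.Q × List V × M → ℕ → Prop
  | refl (c : A.Q × List V × M) : Steps A c c 0
  | step {s : A.Q} {r : M} {q : A.Q} {w : List V} {m : M} {c : A.Q × List V × M} {k : ℕ}
      {a : V} (h : (s, r) ∈ A.δ q a) (ih : Steps A (s, w, m * r) c k) :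
      Steps A (q, a :: w, m) c (if r = 1 then k else k + 1)

/-- The word `w` is accepted using exactly `k` non-identity group elements: starting from the
initial state with register `1`, the whole input is read and a final state is reached with
register `1`. -/
def EFA.AcceptsN (A : EFA V M) (w : List V) (k : ℕ) : Prop :=
  ∃ q ∈ A.F, A.Steps (A.q₀, w, 1) (q, [], 1) k

/-- The language accepted by an EFA. -/
def EFA.language (A : EFA V M) : Language V := {w | ∃ k, A.AcceptsN w k}

/-- Group memory complexity of a word: the minimal number of non-identity group elements used
over all accepting computations (`0` if the word is not accepted). -/
noncomputable def EFA.gmcW (A : EFA V M) (w : List V) : ℕ :=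
  sInf {k | A.AcceptsN w k}

/-- Group memory complexity of the EFA: maximum over words of length `n`. -/
noncomputable def EFA.gmcFun (A : EFA V M) (n : ℕ) : ℕ :=
  sSup {m | ∃ w : List V, w.length = n ∧ A.gmcW w = m}

/-!
A *gap* of length `g` in a word over `{a, b}` is a `b` followed by exactly `g` letters `a` and
then by a `b` or the end of the word. The automaton `gapEFA x` guesses a gap, multiplies the
register by `x⁻¹` for each `a` of the gap and by `x` for each `b` it chooses to count. When `x`
has infinite order the register returns to `1` exactly when `g` of the `b`s were counted, so the
automaton accepts the words having a gap no longer than their number of `b`s, with runs using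
`2 g` non-identity elements.

Let `g` be the shortest such gap. Every gap is at least as long, since a shorter one would also
qualify; as every `b` opens a gap, a word of length `n` has `g (g + 1) ≤ #b (g + 1) ≤ n`, so
`g ≤ √n`. The language is not regular: the suffixes `aᵏ` separate the left quotients of the
prefixes `(b a^(i+2))ⁱ b`.
-/

namespace EFA

variable (A : EFA V M)

def Reaches (c c' : A.Q × List V × M) (n : ℕ) : Prop := ∃ k ≤ n, A.Steps c c' k

variable {A}

theorem Steps.trans {c₁ c₂ c₃ : A.Q × List V × M} {k l : ℕ} (h₁ : A.Steps c₁ c₂ k)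
    (h₂ : A.Steps c₂ c₃ l) : A.Steps c₁ c₃ (k + l) := by
  induction h₁ with
  | refl => simpa using h₂
  | step hδ _ ih =>
    convert Steps.step hδ (ih h₂) using 1
    split_ifs <;> omega

theorem Steps.backward_invariant (P : A.Q × List V × M → Prop)
    (hP : ∀ {q s : A.Q} {a : V} {w : List V} {m r : M},
      (s, r) ∈ A.δ q a → P (s, w, m * r) → P (q, a :: w, m))
    {c c' : A.Q × List V × M} {k : ℕ} (h : A.Steps c c' k) (hc' : P c') : P c := by
  induction h with
  | refl => exact hc'
  | step hδ _ ih => exact hP hδ (ih hc')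

namespace Reaches

variable {c c₁ c₂ c₃ : A.Q × List V × M} {n n₁ n₂ : ℕ}

theorem refl (c : A.Q × List V × M) : A.Reaches c c 0 := ⟨0, le_rfl, .refl c⟩

theorem mono (h : A.Reaches c₁ c₂ n₁) (hn : n₁ ≤ n₂) : A.Reaches c₁ c₂ n₂ :=
  let ⟨k, hk, hs⟩ := h
  ⟨k, hk.trans hn, hs⟩

theorem trans (h₁ : A.Reaches c₁ c₂ n₁) (h₂ : A.Reaches c₂ c₃ n₂) :
    A.Reaches c₁ c₃ (n₁ + n₂) :=
  let ⟨k₁, hk₁, hs₁⟩ := h₁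
  let ⟨k₂, hk₂, hs₂⟩ := h₂
  ⟨k₁ + k₂, by omega, hs₁.trans hs₂⟩

theorem cons {q s : A.Q} {a : V} {w : List V} {m r : M} (hδ : (s, r) ∈ A.δ q a)
    (h : A.Reaches (s, w, m * r) c n) : A.Reaches (q, a :: w, m) c (n + 1) :=
  let ⟨_, hk, hs⟩ := h
  ⟨_, by split_ifs <;> omega, .step hδ hs⟩

theorem cons_one {q s : A.Q} {a : V} {w : List V} {m : M} (hδ : (s, 1) ∈ A.δ q a)
    (h : A.Reaches (s, w, m) c n) : A.Reaches (q, a :: w, m) c n :=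
  let ⟨k, hk, hs⟩ := h
  ⟨k, hk, by simpa using Steps.step hδ (by rwa [mul_one])⟩

end Reaches

theorem gmcW_le {w : List V} {n : ℕ}
    (h : w ∈ A.language → ∃ q ∈ A.F, A.Reaches (A.q₀, w, 1) (q, [], 1) n) : A.gmcW w ≤ n := by
  by_cases hw : w ∈ A.language
  · obtain ⟨q, hq, k, hk, hs⟩ := h hw
    exact (Nat.sInf_le (show A.AcceptsN w k from ⟨q, hq, hs⟩)).trans hk
  · have : {k | A.AcceptsN w k} = ∅ := Set.eq_empty_of_forall_notMem fun k hk => hw ⟨k, hk⟩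
    simp [gmcW, this]

theorem gmcFun_le {f : ℕ → ℕ} (h : ∀ w, A.gmcW w ≤ f w.length) (n : ℕ) : A.gmcFun n ≤ f n :=
  csSup_le' <| by
    rintro _ ⟨w, rfl, rfl⟩
    exact h w

end EFA

namespace ShortGap

inductive AB
  | a
  | b
  deriving DecidableEq

instance : Fintype AB := ⟨{.a, .b}, by rintro (_ | _) <;> simp⟩

open AB

section Words

open List

def HasGap (w : List AB) (g : ℕ) : Prop :=
  ∃ u v, w = u ++ b :: (replicate g a ++ v) ∧ v.head? ≠ some a

def language : Language AB := {w | ∃ g, HasGap w g ∧ g ≤ w.count b}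

@[simp] theorem count_b_replicate_a (k : ℕ) : (replicate k a).count b = 0 := by
  simp [count_replicate]

theorem HasGap.append_left {w : List AB} {g : ℕ} (h : HasGap w g) (u' : List AB) :
    HasGap (u' ++ w) g :=
  let ⟨u, v, hw, hv⟩ := h
  ⟨u' ++ u, v, by simp [hw], hv⟩

theorem exists_eq_replicate_append (w : List AB) :
    ∃ k v, w = replicate k a ++ v ∧ v.head? ≠ some a := by
  induction w with
  | nil => exact ⟨0, [], rfl, by simp⟩
  | cons c w ih =>
    cases c with
    | a =>
      obtain ⟨k, v, rfl, hv⟩ := ih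
      exact ⟨k + 1, v, rfl, hv⟩
    | b => exact ⟨0, b :: w, rfl, by simp⟩

theorem eq_of_replicate_append_eq {g n : ℕ} {v w : List AB}
    (h : replicate g a ++ v = replicate n a ++ w) (hv : v.head? ≠ some a)
    (hw : w.head? ≠ some a) : g = n := by
  induction g generalizing n with
  | zero =>
    cases n with
    | zero => rfl
    | succ n => subst h; simp [replicate_succ] at hv
  | succ g ih =>
    cases n with
    | zero => subst h; simp [replicate_succ] at hw
    | succ n => simpa using ih (by simpa [replicate_succ] using h)

theorem HasGap.eq_or_hasGap {n g : ℕ} {w : List AB} (h : HasGap (b :: (replicate n a ++ w)) g)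
    (hw : w.head? ≠ some a) : g = n ∨ HasGap w g := by
  obtain ⟨u, v, huv, hv⟩ := h
  cases u with
  | nil => exact .inl (eq_of_replicate_append_eq (by simpa using huv.symm) hv hw)
  | cons _ u =>
    obtain ⟨-, huv⟩ := List.cons_eq_cons.mp huv
    rcases List.append_eq_append_iff.mp huv.symm with ⟨s, hs, hsw⟩ | ⟨s, rfl, rfl⟩
    · cases s with
      | nil => exact .inr ⟨[], v, by simpa using hsw.symm, hv⟩
      | cons c s =>
        obtain ⟨rfl, -⟩ := List.cons_eq_cons.mp (hsw.trans (List.cons_append ..))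
        have : b ∈ replicate n a := by simp [hs]
        simp at this
    · exact .inr ⟨s, v, rfl, hv⟩

theorem count_mul_le_length {w : List AB} {m : ℕ} (hm : ∀ g, HasGap w g → m ≤ g) :
    w.count b * (m + 1) ≤ w.length := by
  suffices ∀ n (w : List AB), w.count b = n → (∀ g, HasGap w g → m ≤ g) →
      n * (m + 1) ≤ w.length from this _ w rfl hm
  intro n
  induction n with
  | zero => simp
  | succ n ih =>
    intro w hw hm
    obtain ⟨k, v, rfl, hv⟩ := exists_eq_replicate_append w
    obtain ⟨v, rfl⟩ : ∃ v', v = b :: v' := by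
      rcases v with _ | ⟨_ | _, v⟩
      · simp at hw
      · simp at hv
      · exact ⟨v, rfl⟩
    obtain ⟨g, v, rfl, hv'⟩ := exists_eq_replicate_append v
    have hg : m ≤ g := hm g ⟨replicate k a, v, rfl, hv'⟩
    have hrest : n * (m + 1) ≤ v.length := ih v (by simpa using hw) fun g' hg' =>
      hm g' (by simpa using hg'.append_left (replicate k a ++ b :: replicate g a))
    simp only [length_append, length_replicate, length_cons]
    nlinarith

theorem exists_hasGap_le_sqrt {w : List AB} (hw : w ∈ language) :
    ∃ g, HasGap w g ∧ g ≤ w.count b ∧ g ≤ Nat.sqrt w.length := by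
  refine ⟨Nat.find hw, (Nat.find_spec hw).1, (Nat.find_spec hw).2, Nat.le_sqrt.mpr ?_⟩
  have hmin : ∀ g, HasGap w g → Nat.find hw ≤ g := fun g hg =>
    not_lt.mp fun hlt => Nat.find_min hw hlt ⟨hg, hlt.le.trans (Nat.find_spec hw).2⟩
  calc Nat.find hw * Nat.find hw ≤ w.count b * (Nat.find hw + 1) :=
        Nat.mul_le_mul (Nat.find_spec hw).2 (Nat.le_succ _)
    _ ≤ w.length := count_mul_le_length hmin

def blocks (N : ℕ) : ℕ → ℕ → List AB
  | 0, k => b :: replicate k a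
  | i + 1, k => b :: (replicate N a ++ blocks N i k)

theorem blocks_append_replicate (N i k : ℕ) : blocks N i 0 ++ replicate k a = blocks N i k := by
  induction i with
  | zero => rfl
  | succ i ih => simp [blocks, ← ih]

@[simp] theorem count_blocks (N i k : ℕ) : (blocks N i k).count b = i + 1 := by
  induction i with
  | zero => simp [blocks]
  | succ i ih => simp [blocks, ih]

theorem hasGap_blocks (N i k : ℕ) : HasGap (blocks N i k) k := by
  induction i with
  | zero => exact ⟨[], [], by simp [blocks], by simp⟩
  | succ i ih => exact ih.append_left (b :: replicate N a)

theorem HasGap.eq_of_blocks {N i k g : ℕ} (h : HasGap (blocks N i k) g) : g = N ∨ g = k := by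
  induction i with
  | zero =>
    rcases HasGap.eq_or_hasGap (w := []) (by simpa [blocks] using h) (by simp) with
      hg | ⟨u, v, huv, -⟩
    · exact .inr hg
    · simp at huv
  | succ i ih =>
    have hstart : (blocks N i k).head? ≠ some a := by cases i <;> simp [blocks]
    exact (h.eq_or_hasGap hstart).elim .inl ih

theorem not_isRegular_language : ¬ language.IsRegular := fun h => by
  have mem_iff (i k : ℕ) :
      replicate k a ∈ language.leftQuotient (blocks (i + 2) i 0) ↔ k ≤ i + 1 := by
    rw [Language.mem_leftQuotient, blocks_append_replicate]
    refine ⟨fun ⟨g, hg, hle⟩ => ?_, fun hk => ⟨k, hasGap_blocks .., by simpa using hk⟩⟩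
    rw [count_blocks] at hle
    rcases hg.eq_of_blocks with rfl | rfl <;> omega
  have hinj : Function.Injective fun i => language.leftQuotient (blocks (i + 2) i 0) :=
    .of_lt_imp_ne fun i j hij heq => by
      have := mem_iff j (j + 1)
      rw [← heq, mem_iff] at this
      omega
  exact (Set.infinite_range_of_injective hinj).mono
    (Set.range_subset_iff.mpr fun i => Set.mem_range_self _) h.finite_range_leftQuotient

end Words

inductive Phase
  | before
  | gap
  | after
  deriving DecidableEq

instance : Fintype Phase := ⟨{.before, .gap, .after}, by rintro (_ | _ | _) <;> simp⟩

open Phase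

def nextOnB : Phase → Set Phase
  | before => {before, gap}
  | gap => {after}
  | after => {after}

def gapδ (x : M) : Phase → AB → Set (Phase × M)
  | q, b => nextOnB q ×ˢ {1, x}
  | before, a => {(before, 1)}
  | gap, a => {(gap, x⁻¹)}
  | after, a => {(after, 1)}

def gapEFA (x : M) : EFA AB M where
  Q := Phase
  δ := gapδ x
  fin q c := by cases q <;> cases c <;> simp only [gapδ] <;> exact Set.toFinite _
  q₀ := before
  F := {gap, after}

variable {x : M}

theorem exists_eq_add_of_le_add_one {t n : ℕ} (h : t ≤ n + 1) :
    ∃ t' e, t' ≤ n ∧ e ≤ 1 ∧ t = t' + e :=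
  ⟨t - min t 1, min t 1, by omega, by omega, by omega⟩

theorem reaches_b {q s : Phase} (hs : s ∈ nextOnB q) {e : ℕ} (he : e ≤ 1) {w : List AB} {m : M}
    {c : Phase × List AB × M} {n : ℕ} (h : (gapEFA x).Reaches (s, w, m * x ^ e) c n) :
    (gapEFA x).Reaches (q, b :: w, m) c (n + e) := by
  interval_cases e
  · exact .cons_one (show (s, 1) ∈ gapδ x q b by simp [gapδ, hs]) (by simpa using h)
  · exact .cons (show (s, x ^ 1) ∈ gapδ x q b by simp [gapδ, hs]) h

theorem reaches_count {q : Phase} (hq : q ≠ gap) (u w : List AB) (m : M) {t : ℕ}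
    (ht : t ≤ u.count b) : (gapEFA x).Reaches (q, u ++ w, m) (q, w, m * x ^ t) t := by
  induction u generalizing m t with
  | nil =>
    obtain rfl : t = 0 := by simpa using ht
    simpa using EFA.Reaches.refl _
  | cons c u ih =>
    cases c with
    | a =>
      have hδ : (q, 1) ∈ gapδ x q a := by cases q <;> simp_all [gapδ]
      exact .cons_one hδ (ih m (by simpa using ht))
    | b =>
      obtain ⟨t, e, ht', he, rfl⟩ := exists_eq_add_of_le_add_one (by simpa using ht)
      have hq' : q ∈ nextOnB q := by cases q <;> simp_all [nextOnB]
      have := reaches_b hq' he (ih (m * x ^ e) ht')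
      rwa [mul_assoc, ← pow_add, add_comm e] at this

theorem reaches_gap (g : ℕ) (w : List AB) (m : M) :
    (gapEFA x).Reaches (gap, List.replicate g a ++ w, m) (gap, w, m * x⁻¹ ^ g) g := by
  induction g generalizing m with
  | zero => simpa using EFA.Reaches.refl _
  | succ g ih =>
    rw [pow_succ', ← mul_assoc]
    exact .cons (Set.mem_singleton _) (ih _)

theorem reaches_enter (u w : List AB) (m : M) {t : ℕ} (ht : t ≤ u.count b + 1) :
    (gapEFA x).Reaches (before, u ++ b :: w, m) (gap, w, m * x ^ t) t := by
  obtain ⟨t, e, ht', he, rfl⟩ := exists_eq_add_of_le_add_one ht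
  have := (reaches_count (x := x) (by simp) u (b :: w) m ht').trans
    (reaches_b (show gap ∈ nextOnB before by simp [nextOnB]) he (.refl _))
  simpa [mul_assoc, ← pow_add] using this

theorem reaches_exit {v : List AB} (hv : v.head? ≠ some a) (m : M) {t : ℕ} (ht : t ≤ v.count b) :
    ∃ q ∈ (gapEFA x).F, (gapEFA x).Reaches (gap, v, m) (q, [], m * x ^ t) t := by
  match v, hv with
  | [], _ =>
    obtain rfl : t = 0 := by simpa using ht
    exact ⟨gap, Set.mem_insert _ _, by simpa using EFA.Reaches.refl _⟩
  | b :: v, _ =>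
    obtain ⟨t, e, ht', he, rfl⟩ := exists_eq_add_of_le_add_one (by simpa using ht)
    have := reaches_b (show after ∈ nextOnB gap by simp [nextOnB]) he
      (reaches_count (by simp) v [] (m * x ^ e) ht')
    refine ⟨after, Set.mem_insert_of_mem _ rfl, ?_⟩
    rwa [List.append_nil, mul_assoc, ← pow_add, add_comm e] at this

theorem reaches_accept_of_hasGap {w : List AB} {g : ℕ} (hg : HasGap w g) (hle : g ≤ w.count b) :
    ∃ q ∈ (gapEFA x).F, (gapEFA x).Reaches (before, w, 1) (q, [], 1) (2 * g) := by
  obtain ⟨u, v, rfl, hv⟩ := hg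
  obtain ⟨t₁, t₂, ht₁, ht₂, rfl⟩ : ∃ t₁ t₂, t₁ ≤ u.count b + 1 ∧ t₂ ≤ v.count b ∧ g = t₁ + t₂ := by
    simp only [List.count_append, List.count_cons_self, count_b_replicate_a, zero_add] at hle
    exact ⟨min g (u.count b + 1), g - min g (u.count b + 1), by omega, by omega, by omega⟩
  obtain ⟨q, hq, hexit⟩ := reaches_exit hv (1 * x ^ t₁ * x⁻¹ ^ (t₁ + t₂)) ht₂
  refine ⟨q, hq, ?_⟩
  have := ((reaches_enter u _ 1 ht₁).trans (reaches_gap _ v _)).trans hexit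
  rwa [show 1 * x ^ t₁ * x⁻¹ ^ (t₁ + t₂) * x ^ t₂ = 1 by group,
    show t₁ + (t₁ + t₂) + t₂ = 2 * (t₁ + t₂) by ring] at this

theorem language_le_language_gapEFA (x : M) : language ≤ (gapEFA x).language := by
  rintro w ⟨g, hg, hle⟩
  obtain ⟨q, hq, k, -, hs⟩ := reaches_accept_of_hasGap (x := x) hg hle
  exact ⟨k, q, hq, hs⟩

/-- A necessary condition for an accepting run from the configuration `(q, w, m)`. -/
def Inv (x : M) : Phase → List AB → M → Prop
  | before, w, m => ∃ g, HasGap w g ∧ ∃ t ≤ w.count b, m * x ^ t = x ^ g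
  | gap, w, m => ∃ g v, w = List.replicate g a ++ v ∧ v.head? ≠ some a ∧
      ∃ t ≤ v.count b, m * x ^ t = x ^ g
  | after, w, m => ∃ t ≤ w.count b, m * x ^ t = 1

theorem inv_cons {q s : Phase} {c : AB} {w : List AB} {m r : M} (hδ : (s, r) ∈ gapδ x q c)
    (h : Inv x s w (m * r)) : Inv x q (c :: w) m := by
  cases c with
  | a =>
    cases q <;> obtain ⟨rfl, rfl⟩ := Prod.mk.inj (Set.mem_singleton_iff.mp hδ)
    · obtain ⟨g, hg, t, ht, hm⟩ := h
      exact ⟨g, hg.append_left [a], t, by simpa using ht, by simpa using hm⟩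
    · obtain ⟨g, v, rfl, hv, t, ht, hm⟩ := h
      exact ⟨g + 1, v, rfl, hv, t, ht, by rw [pow_succ, ← hm]; group⟩
    · obtain ⟨t, ht, hm⟩ := h
      exact ⟨t, by simpa using ht, by simpa using hm⟩
  | b =>
    obtain ⟨hs, hr⟩ := Set.mem_prod.mp hδ
    obtain ⟨e, he, rfl⟩ : ∃ e ≤ 1, r = x ^ e := by
      rcases hr with hr | hr
      exacts [⟨0, zero_le_one, by simpa using hr⟩, ⟨1, le_rfl, by simpa using hr⟩]
    cases q <;> simp only [nextOnB, Set.mem_insert_iff, Set.mem_singleton_iff] at hs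
    · rcases hs with rfl | rfl
      · obtain ⟨g, hg, t, ht, hm⟩ := h
        rw [mul_assoc, ← pow_add] at hm
        exact ⟨g, hg.append_left [b], e + t, by rw [List.count_cons_self]; omega, hm⟩
      · obtain ⟨g, v, rfl, hv, t, ht, hm⟩ := h
        rw [mul_assoc, ← pow_add] at hm
        refine ⟨g, ⟨[], v, rfl, hv⟩, e + t, ?_, hm⟩
        simp only [List.count_cons_self, List.count_append, count_b_replicate_a]
        omega
    · subst hs
      obtain ⟨t, ht, hm⟩ := h
      rw [mul_assoc, ← pow_add] at hm
      exact ⟨0, b :: w, rfl, by simp, e + t, by rw [List.count_cons_self]; omega,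
        by rwa [pow_zero]⟩
    · subst hs
      obtain ⟨t, ht, hm⟩ := h
      rw [mul_assoc, ← pow_add] at hm
      exact ⟨e + t, by rw [List.count_cons_self]; omega, hm⟩

theorem language_gapEFA_le (hx : ¬IsOfFinOrder x) : (gapEFA x).language ≤ language := by
  rintro w ⟨k, q, hq, hs⟩
  have hinv : Inv x before w 1 := by
    refine hs.backward_invariant (fun c => Inv x c.1 c.2.1 c.2.2) (fun hδ h => inv_cons hδ h) ?_
    rcases hq with rfl | rfl
    exacts [⟨0, [], rfl, by simp, 0, le_rfl, by simp⟩, ⟨0, le_rfl, by simp⟩]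
  obtain ⟨g, hg, t, ht, hm⟩ := hinv
  obtain rfl : t = g := injective_pow_iff_not_isOfFinOrder.mpr hx (by simpa using hm)
  exact ⟨t, hg, ht⟩

theorem language_gapEFA (hx : ¬IsOfFinOrder x) : (gapEFA x).language = language :=
  (language_gapEFA_le hx).antisymm (language_le_language_gapEFA x)

theorem gmcFun_gapEFA_le (hx : ¬IsOfFinOrder x) (n : ℕ) :
    (gapEFA x).gmcFun n ≤ 2 * Nat.sqrt n := by
  refine EFA.gmcFun_le (f := fun n => 2 * Nat.sqrt n) (fun w => EFA.gmcW_le fun hw => ?_) n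
  obtain ⟨g, hg, hle, hsqrt⟩ := exists_hasGap_le_sqrt (language_gapEFA_le hx hw)
  obtain ⟨q, hq, h⟩ := reaches_accept_of_hasGap (x := x) hg hle
  exact ⟨q, hq, h.mono (by omega)⟩

end ShortGap

open ShortGap in
/-- There is an EFA over `ℤ × ℤ₂` accepting a non-regular language with group memory
complexity in `O(√n)`. -/
theorem efa_int_zmod2_sqrt :
    ∃ (V : Type) (_ : Fintype V)
      (A : EFA V (Multiplicative ℤ × Multiplicative (ZMod 2))),
      ¬ A.language.IsRegular ∧ InO A.gmcFun Nat.sqrt := by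
  obtain ⟨x, hx⟩ : ∃ x : Multiplicative ℤ × Multiplicative (ZMod 2), ¬IsOfFinOrder x :=
    ⟨(.ofAdd 1, 1), fun h => by
      simpa [isOfFinOrder_iff_eq_one] using (MonoidHom.fst _ _).isOfFinOrder h⟩
  refine ⟨AB, inferInstance, gapEFA x, language_gapEFA hx ▸ not_isRegular_language, 2, fun n => ?_⟩
  exact (gmcFun_gapEFA_le hx n).trans (Nat.le_add_right _ _)
end

section
/- Given a finite automaton with translucent letters (FATL) M and a positive integer c, the language L(M, ≤ c) = { w ∈ L(M) : jc_M(w) ≤ c } is regular. Consequently, JCL(1) (languages accepted by FATL with O(1) jumping complexity) equals the class of regular languages. -/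
/-- A nondeterministic finite automaton with translucent letters (FATL): an NFA whose partial
transition function (`δ q a = ∅` meaning "undefined") is extended with jumping steps. -/
structure FATL (V : Type) where
  /-- States. -/
  Q : Type
  [fQ : Fintype Q]
  /-- Transition function (`∅` = undefined). -/
  δ : Q → V → Set Q
  /-- Initial state. -/
  q₀ : Q
  /-- Final states. -/
  F : Set Q

variable {V : Type}

/-- `M.Steps c c' k` : the FATL `M` goes from configuration `c` (state, remaining word) to
configuration `c'` using exactly `k` jumping steps. An ordinary step consumes the first letter;
a jumping step `(q, x a y) ↷ (p, x y)` (with `x` nonempty) consumes a letter `a` with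
`p ∈ δ q a`, provided `δ q b` is undefined for every letter `b` occurring in `x`. -/
inductive FATL.Steps (M : FATL V) : M.Q × List V → M.Q × List V → ℕ → Prop
  | refl (c : M.Q × List V) : Steps M c c 0
  | ord {p q : M.Q} {y : List V} {c : M.Q × List V} {k : ℕ} {a : V}
      (h : p ∈ M.δ q a) (ih : Steps M (p, y) c k) : Steps M (q, a :: y) c k
  | jump {p q : M.Q} {x y : List V} {c : M.Q × List V} {k : ℕ} {a : V}
      (h : p ∈ M.δ q a) (hx : x ≠ []) (hblock : ∀ b ∈ x, M.δ q b = ∅)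
      (ih : Steps M (p, x ++ y) c k) : Steps M (q, x ++ a :: y) c (k + 1)

/-- The word `w` is accepted using exactly `k` jumping steps. -/
def FATL.AcceptsN (M : FATL V) (w : List V) (k : ℕ) : Prop :=
  ∃ f ∈ M.F, M.Steps (M.q₀, w) (f, []) k

/-- The language accepted by an FATL. -/
def FATL.language (M : FATL V) : Language V := {w | ∃ k, M.AcceptsN w k}

/-- Jumping complexity of a word: the minimal number of jumping steps over all accepting
computations (`0` if the word is not accepted). -/
noncomputable def FATL.jcW (M : FATL V) (w : List V) : ℕ :=
  sInf {k | M.AcceptsN w k}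

/-- Jumping complexity of the FATL: maximum over words of length `n`. -/
noncomputable def FATL.jcFun (M : FATL V) (n : ℕ) : ℕ :=
  sSup {m | ∃ w : List V, w.length = n ∧ M.jcW w = m}

/-- The class `JCL(f)` of languages accepted by some FATL with jumping complexity in `O(f)`. -/
def JCL (V : Type) (f : ℕ → ℕ) : Set (Language V) :=
  {L | ∃ M : FATL V, M.language = L ∧ InO M.jcFun f}


/-! A run with at most `c` jumps is recognised letter by letter: after a prefix has been read,
what remains to be accepted is a union of languages of three kinds — the words accepted from a
state within `c` jumps, left quotients of the words accepted within `c - 1` jumps, and such a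
quotient with one letter inserted after a prefix of letters that are blocked at some state (the
letter a pending jump will consume). By induction on `c` there are finitely many of them, so by
Myhill–Nerode the language is regular. Conversely a DFA is an FATL that can never jump, and an
FATL with bounded jumping complexity accepts the same words within a fixed number of jumps. -/

namespace Language

variable {α : Type*}

/-- Myhill–Nerode: every left quotient of a member of `𝓑` is then a union of members of `𝓑`, and
there are finitely many such unions. -/
theorem isRegular_of_leftQuotient_covered {𝓑 : Set (Language α)} (h𝓑 : 𝓑.Finite)
    (hcover : ∀ K ∈ 𝓑, ∀ a, ∀ w ∈ K.leftQuotient [a],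
      ∃ K' ∈ 𝓑, w ∈ K' ∧ K' ≤ K.leftQuotient [a])
    {L : Language α} (hL : L ∈ 𝓑) : L.IsRegular := by
  set 𝓤 : Set (Language α) := {L' | ∀ w ∈ L', ∃ K ∈ 𝓑, w ∈ K ∧ K ≤ L'}
  have h𝓤 : 𝓤.Finite := by
    refine (h𝓑.powerset.image sSup).subset fun L' hL' =>
      ⟨{K ∈ 𝓑 | K ≤ L'}, fun K hK => hK.1, le_antisymm (sSup_le fun K hK => hK.2) ?_⟩
    intro w hw
    obtain ⟨K, hK, hwK, hKL⟩ := hL' w hw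
    exact Set.mem_sUnion.2 ⟨K, ⟨hK, hKL⟩, hwK⟩
  have hquot : ∀ L' ∈ 𝓤, ∀ a, L'.leftQuotient [a] ∈ 𝓤 := by
    intro L' hL' a w hw
    obtain ⟨K, hK, hwK, hKL⟩ := hL' _ hw
    obtain ⟨K', hK', hwK', hK'K⟩ := hcover K hK a w hwK
    exact ⟨K', hK', hwK', hK'K.trans fun v hv => hKL hv⟩
  refine IsRegular.of_finite_range_leftQuotient (h𝓤.subset ?_)
  rintro _ ⟨x, rfl⟩
  induction x using List.reverseRecOn with
  | nil => exact fun w hw => ⟨L, hL, hw, le_rfl⟩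
  | append_singleton x a ih => rw [leftQuotient_append]; exact hquot _ ih a

end Language

namespace FATL

variable (M : FATL V)

def acceptsWithin (q : M.Q) (c : ℕ) : Language V :=
  {w | ∃ k ≤ c, ∃ f ∈ M.F, M.Steps (q, w) (f, []) k}

/-- The words from which one step out of `q` into `p` (a jump unless `x = []`) leaves a word of
`K`. -/
def insertAfterBlocked (q p : M.Q) (K : Language V) : Language V :=
  {w | ∃ x a y, w = x ++ a :: y ∧ (∀ b ∈ x, M.δ q b = ∅) ∧ p ∈ M.δ q a ∧ x ++ y ∈ K}

variable {M}

theorem Steps.jumps_add_length_le {c₁ c₂ : M.Q × List V} {k : ℕ} (h : M.Steps c₁ c₂ k) :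
    k + c₂.2.length ≤ c₁.2.length := by
  induction h with
  | refl => simp
  | ord => simp only [List.length_cons] at *; omega
  | jump => simp only [List.length_append, List.length_cons] at *; omega

theorem cons_mem_acceptsWithin_iff {q : M.Q} {c : ℕ} {b : V} {t : List V} :
    b :: t ∈ M.acceptsWithin q c ↔ (∃ p ∈ M.δ q b, t ∈ M.acceptsWithin p c) ∨
      (M.δ q b = ∅ ∧ ∃ c' p, c = c' + 1 ∧
        t ∈ M.insertAfterBlocked q p ((M.acceptsWithin p c').leftQuotient [b])) := by
  constructor
  · rintro ⟨k, hk, f, hf, h⟩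
    generalize hs : (q, b :: t) = s at h
    cases h with
    | refl => simp at hs
    | ord hp h =>
      simp only [Prod.mk.injEq, List.cons.injEq] at hs
      obtain ⟨rfl, rfl, rfl⟩ := hs
      exact Or.inl ⟨_, hp, k, hk, f, hf, h⟩
    | @jump p _ x y _ k' a hp hx hblock h =>
      obtain ⟨b', x, rfl⟩ := List.exists_cons_of_ne_nil hx
      simp only [List.cons_append, Prod.mk.injEq, List.cons.injEq] at hs
      obtain ⟨rfl, rfl, rfl⟩ := hs
      refine Or.inr ⟨hblock b List.mem_cons_self, k' + (c - (k' + 1)), p, by omega,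
        x, a, y, rfl, fun b' hb' => hblock b' (List.mem_cons_of_mem _ hb'), hp, k', by omega,
        f, hf, h⟩
  · rintro (⟨p, hp, k, hk, f, hf, h⟩ | ⟨hb, c', p, rfl, x, a, y, rfl, hx, hp, k, hk, f, hf, h⟩)
    · exact ⟨k, hk, f, hf, .ord hp h⟩
    · exact ⟨k + 1, by omega, f, hf,
        .jump (x := b :: x) hp (List.cons_ne_nil _ _) (List.forall_mem_cons.2 ⟨hb, hx⟩) h⟩

theorem cons_mem_insertAfterBlocked_iff {q p : M.Q} {K : Language V} {b : V} {t : List V} :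
    b :: t ∈ M.insertAfterBlocked q p K ↔ (p ∈ M.δ q b ∧ t ∈ K) ∨
      (M.δ q b = ∅ ∧ t ∈ M.insertAfterBlocked q p (K.leftQuotient [b])) := by
  constructor
  · rintro ⟨_ | ⟨b', x⟩, a, y, h, hx, hp, hK⟩
    · simp only [List.nil_append, List.cons.injEq] at h
      obtain ⟨rfl, rfl⟩ := h
      exact Or.inl ⟨hp, hK⟩
    · simp only [List.cons_append, List.cons.injEq] at h
      obtain ⟨rfl, rfl⟩ := h
      exact Or.inr ⟨hx b List.mem_cons_self, x, a, y, rfl,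
        fun b' hb' => hx b' (List.mem_cons_of_mem _ hb'), hp, hK⟩
  · rintro (⟨hp, ht⟩ | ⟨hb, x, a, y, rfl, hx, hp, hK⟩)
    · exact ⟨[], b, t, rfl, by simp, hp, ht⟩
    · exact ⟨b :: x, a, y, rfl, List.forall_mem_cons.2 ⟨hb, hx⟩, hp, hK⟩

theorem isRegular_acceptsWithin_of_finite {c : ℕ} {𝓠 : Set (Language V)} (h𝓠 : 𝓠.Finite)
    (hclosed : ∀ K ∈ 𝓠, ∀ b, K.leftQuotient [b] ∈ 𝓠)
    (hprev : ∀ c' p b, c = c' + 1 → (M.acceptsWithin p c').leftQuotient [b] ∈ 𝓠) (q : M.Q) :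
    (M.acceptsWithin q c).IsRegular := by
  have := M.fQ
  refine Language.isRegular_of_leftQuotient_covered (𝓑 := Set.range (M.acceptsWithin · c) ∪ 𝓠 ∪
    ⋃ q, ⋃ p, M.insertAfterBlocked q p '' 𝓠) ?_ ?_ (Or.inl (Or.inl ⟨q, rfl⟩))
  · exact ((Set.finite_range _).union h𝓠).union
      (Set.finite_iUnion fun q => Set.finite_iUnion fun p => h𝓠.image _)
  simp only [Set.mem_union, Set.mem_range, Set.mem_iUnion, Set.mem_image]
  rintro K ((⟨r, rfl⟩ | hK) | ⟨r, p, K, hK, rfl⟩) b w hw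
  · rcases cons_mem_acceptsWithin_iff.1 hw with ⟨p, hp, hw'⟩ | ⟨hb, c', p, rfl, hw'⟩
    · exact ⟨_, Or.inl (Or.inl ⟨p, rfl⟩), hw',
        fun v hv => cons_mem_acceptsWithin_iff.2 (Or.inl ⟨p, hp, hv⟩)⟩
    · exact ⟨_, Or.inr ⟨r, p, _, hprev c' p b rfl, rfl⟩, hw',
        fun v hv => cons_mem_acceptsWithin_iff.2 (Or.inr ⟨hb, c', p, rfl, hv⟩)⟩
  · exact ⟨_, Or.inl (Or.inr (hclosed K hK b)), hw, le_rfl⟩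
  · rcases cons_mem_insertAfterBlocked_iff.1 hw with ⟨hp, hw'⟩ | ⟨hb, hw'⟩
    · exact ⟨K, Or.inl (Or.inr hK), hw',
        fun v hv => cons_mem_insertAfterBlocked_iff.2 (Or.inl ⟨hp, hv⟩)⟩
    · exact ⟨_, Or.inr ⟨r, p, _, hclosed K hK b, rfl⟩, hw',
        fun v hv => cons_mem_insertAfterBlocked_iff.2 (Or.inr ⟨hb, hv⟩)⟩

variable (M) in
theorem isRegular_acceptsWithin (c : ℕ) (q : M.Q) : (M.acceptsWithin q c).IsRegular := by
  induction c generalizing q with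
  | zero => exact isRegular_acceptsWithin_of_finite Set.finite_empty (by simp) (by simp) q
  | succ c ih =>
    have := M.fQ
    refine isRegular_acceptsWithin_of_finite
      (𝓠 := ⋃ p, Set.range (M.acceptsWithin p c).leftQuotient)
      (Set.finite_iUnion fun p => (ih p).finite_range_leftQuotient) ?_ ?_ q
    · simp only [Set.mem_iUnion, Set.mem_range]
      rintro _ ⟨p, x, rfl⟩ b
      exact ⟨p, x ++ [b], Language.leftQuotient_append _ _ _⟩
    · intro c' p b hc
      obtain rfl : c = c' := by omega
      exact Set.mem_iUnion.2 ⟨p, [b], rfl⟩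

theorem acceptsN_jcW {w : List V} (hw : w ∈ M.language) : M.AcceptsN w (M.jcW w) :=
  Nat.sInf_mem (s := {k | M.AcceptsN w k}) hw

variable (M) in
theorem acceptsWithin_q₀ (c : ℕ) :
    M.acceptsWithin M.q₀ c = {w | w ∈ M.language ∧ M.jcW w ≤ c} := by
  ext w
  constructor
  · rintro ⟨k, hk, f, hf, h⟩
    have hacc : M.AcceptsN w k := ⟨f, hf, h⟩
    exact ⟨⟨k, hacc⟩, (Nat.sInf_le hacc).trans hk⟩
  · rintro ⟨hw, hc⟩
    obtain ⟨f, hf, h⟩ := acceptsN_jcW hw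
    exact ⟨_, hc, f, hf, h⟩

variable (M) in
theorem jcW_le_length (w : List V) : M.jcW w ≤ w.length := by
  by_cases hw : w ∈ M.language
  · obtain ⟨f, -, h⟩ := acceptsN_jcW hw
    simpa using h.jumps_add_length_le
  · have hempty : {k | M.AcceptsN w k} = ∅ := Set.not_nonempty_iff_eq_empty.1 hw
    simp [jcW, hempty]

variable (M) in
theorem jcW_le_jcFun (w : List V) : M.jcW w ≤ M.jcFun w.length :=
  le_csSup ⟨w.length, by rintro _ ⟨v, hv, rfl⟩; exact hv ▸ M.jcW_le_length v⟩ ⟨w, rfl, rfl⟩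

theorem language_eq_acceptsWithin_of_jcFun_le {c : ℕ} (h : ∀ n, M.jcFun n ≤ c) :
    M.language = M.acceptsWithin M.q₀ c := by
  rw [acceptsWithin_q₀]
  ext w
  exact ⟨fun hw => ⟨hw, (M.jcW_le_jcFun w).trans (h _)⟩, And.left⟩

/-- Its transitions are total, so it never jumps. -/
def ofDFA {σ : Type} [Fintype σ] (D : DFA V σ) : FATL V where
  Q := σ
  δ s a := {D.step s a}
  q₀ := D.start
  F := D.accept

section OfDFA

variable {σ : Type} [Fintype σ] (D : DFA V σ)

theorem ofDFA_steps {c₁ c₂ : (ofDFA D).Q × List V} {k : ℕ} (h : (ofDFA D).Steps c₁ c₂ k) :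
    k = 0 ∧ D.evalFrom c₁.1 c₁.2 = D.evalFrom c₂.1 c₂.2 := by
  induction h with
  | refl => exact ⟨rfl, rfl⟩
  | ord hp _ ih =>
    obtain rfl : _ = D.step _ _ := hp
    exact ih
  | jump _ hx hblock =>
    obtain ⟨b, hb⟩ := List.exists_mem_of_ne_nil _ hx
    exact absurd (hblock b hb) (Set.singleton_ne_empty _)

theorem ofDFA_steps_evalFrom (s : σ) (w : List V) :
    (ofDFA D).Steps (s, w) (D.evalFrom s w, []) 0 := by
  induction w generalizing s with
  | nil => exact .refl _
  | cons a w ih => exact .ord rfl (ih _)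

theorem language_ofDFA : (ofDFA D).language = D.accepts := by
  ext w
  constructor
  · rintro ⟨k, f, hf, h⟩
    show D.evalFrom D.start w ∈ D.accept
    have hrun : D.evalFrom D.start w = f := (ofDFA_steps D h).2
    exact hrun ▸ hf
  · exact fun hw => ⟨0, _, hw, ofDFA_steps_evalFrom D _ w⟩

theorem jcW_ofDFA (w : List V) : (ofDFA D).jcW w = 0 := by
  rw [jcW, Nat.sInf_eq_zero]
  by_cases hw : w ∈ (ofDFA D).language
  · obtain ⟨k, f, hf, h⟩ := hw
    obtain rfl := (ofDFA_steps D h).1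
    exact Or.inl ⟨f, hf, h⟩
  · exact Or.inr (Set.not_nonempty_iff_eq_empty.1 hw)

theorem jcFun_ofDFA (n : ℕ) : (ofDFA D).jcFun n = 0 :=
  Nat.le_zero.1 (csSup_le' (by rintro _ ⟨w, -, rfl⟩; exact (jcW_ofDFA D w).le))

end OfDFA

end FATL

/-- For every FATL `M` and positive integer `c`, the language
`L(M, ≤ c) = { w ∈ L(M) : jc_M(w) ≤ c }` is regular; consequently `JCL(1)` equals the class
of regular languages. -/
theorem fatl_le_c_regular_and_JCL_one (V : Type) :
    (∀ (M : FATL V) (c : ℕ), 0 < c →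
        Language.IsRegular {w : List V | w ∈ M.language ∧ M.jcW w ≤ c}) ∧
    JCL V (fun _ => 1) = {L : Language V | L.IsRegular} := by
  refine ⟨fun M c _ => M.acceptsWithin_q₀ c ▸ M.isRegular_acceptsWithin c M.q₀, ?_⟩
  ext L
  constructor
  · rintro ⟨M, rfl, c, hc⟩
    rw [FATL.language_eq_acceptsWithin_of_jcFun_le hc]
    exact M.isRegular_acceptsWithin _ _
  · rintro ⟨σ, _, D, rfl⟩
    exact ⟨FATL.ofDFA D, FATL.language_ofDFA D, 0, fun n => by simp [FATL.jcFun_ofDFA]⟩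
end

section
/- If M is a finite automaton with translucent letters accepting L(M) = { w ∈ {a,b}* : |w|_a = |w|_b ≥ 1 }, then jc_M(n) ∈ Ω(n). -/
variable {V : Type}

attribute [instance] FATL.fQ

namespace FATLaux

open List

abbrev A (p : ℕ) : List (Fin 2) := List.replicate p 0
abbrev B (q : ℕ) : List (Fin 2) := List.replicate q 1

lemma A_succ (p : ℕ) : A (p + 1) = (0 : Fin 2) :: A p := rfl
lemma B_succ (q : ℕ) : B (q + 1) = (1 : Fin 2) :: B q := rfl

/-- A chain of ordinary `a`-reading steps. -/
inductive AChain (M : FATL (Fin 2)) : M.Q → M.Q → ℕ → Prop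
  | refl (s : M.Q) : AChain M s s 0
  | step {s s' t : M.Q} {n : ℕ} (h : s' ∈ M.δ s 0) (ih : AChain M s' t n) :
      AChain M s t (n + 1)

lemma AChain.snoc {M : FATL (Fin 2)} {u s s' : M.Q} {d : ℕ}
    (h : AChain M u s d) (h' : s' ∈ M.δ s 0) : AChain M u s' (d + 1) := by
  induction h with
  | refl _ => exact .step h' (.refl _)
  | step h1 _ ih => exact .step h1 (ih h')

lemma pumpChain {M : FATL (Fin 2)} {u v : M.Q} {t : ℕ} (hc : AChain M u v t) :
    ∀ {p q : ℕ} {c : M.Q × List (Fin 2)} {j : ℕ},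
      M.Steps (v, A p ++ B q) c j → M.Steps (u, A (p + t) ++ B q) c j := by
  induction hc with
  | refl s => intro p q c j h; simpa using h
  | @step s1 s2 s3 n h1 _ ih =>
    intro p q c j h
    have h2 := ih h
    have e : p + (n + 1) = (p + n) + 1 := by omega
    rw [e]
    exact FATL.Steps.ord h1 h2

lemma steps_inv (M : FATL (Fin 2)) {s f : M.Q} {j p q : ℕ}
    (h : M.Steps (s, A p ++ B q) (f, []) j) :
    (p = 0 ∧ q = 0 ∧ s = f ∧ j = 0) ∨
    (∃ p' s', p = p' + 1 ∧ s' ∈ M.δ s 0 ∧ M.Steps (s', A p' ++ B q) (f, []) j) ∨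
    (∃ q' s', p = 0 ∧ q = q' + 1 ∧ s' ∈ M.δ s 1 ∧ M.Steps (s', B q') (f, []) j) ∨
    (∃ q' j' s', 1 ≤ p ∧ q = q' + 1 ∧ j = j' + 1 ∧ M.δ s 0 = ∅ ∧ s' ∈ M.δ s 1 ∧
      M.Steps (s', A p ++ B q') (f, []) j') := by
  obtain ⟨w, hw⟩ : ∃ w, w = A p ++ B q := ⟨_, rfl⟩
  rw [← hw] at h
  cases h with
  | refl c =>
    left
    simp only [A, B] at hw
    rw [eq_comm, List.append_eq_nil_iff] at hw
    simp only [List.replicate_eq_nil_iff] at hw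
    exact ⟨hw.1, hw.2, rfl, rfl⟩
  | ord hd ih =>
    rename_i s' y a
    cases p with
    | zero =>
      simp only [A, List.replicate_zero, List.nil_append] at hw
      cases q with
      | zero => simp [B] at hw
      | succ q' =>
        rw [B_succ] at hw
        obtain ⟨rfl, rfl⟩ := List.cons.inj hw
        exact Or.inr (Or.inr (Or.inl ⟨q', s', rfl, rfl, hd, ih⟩))
    | succ p' =>
      rw [show A (p' + 1) ++ B q = (0 : Fin 2) :: (A p' ++ B q) from rfl] at hw
      obtain ⟨rfl, rfl⟩ := List.cons.inj hw
      exact Or.inr (Or.inl ⟨p', s', rfl, hd, ih⟩)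
  | jump hd hx hblock ih =>
    rename_i s' x y k a
    have hxpos : 0 < x.length := List.length_pos_iff.mpr hx
    have hlen := congrArg List.length hw
    simp only [List.length_append, List.length_cons, A, B, List.length_replicate] at hlen
    rcases Nat.lt_trichotomy x.length p with hlt | heq | hgt
    · -- x is a proper prefix of the a-block : the consumed letter is 0, contradiction
      exfalso
      have e1 : A p = A x.length ++ A (p - x.length - 1 + 1) := by
        rw [← List.replicate_add]; congr 1; omega
      have hsplit : A p ++ B q
          = A x.length ++ ((0 : Fin 2) :: (A (p - x.length - 1) ++ B q)) := by
        rw [e1, A_succ]; simp [List.append_assoc]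
      rw [hsplit] at hw
      obtain ⟨hx_eq, hcons⟩ := List.append_inj hw (by simp [A])
      have ha : a = 0 := (List.cons.inj hcons).1
      have h0x : (0 : Fin 2) ∈ x := by
        rw [hx_eq]; exact List.mem_replicate.mpr ⟨by omega, rfl⟩
      rw [ha, hblock 0 h0x] at hd
      exact absurd hd (Set.notMem_empty _)
    · -- the consumed letter is the first b
      obtain ⟨hx_eq, hcons⟩ := List.append_inj hw (by simp [A, heq])
      cases q with
      | zero => simp [B] at hcons
      | succ q' =>
        rw [B_succ] at hcons
        obtain ⟨rfl, rfl⟩ := List.cons.inj hcons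
        have hp1 : 1 ≤ p := by omega
        have h0x : (0 : Fin 2) ∈ x := by
          rw [hx_eq]; exact List.mem_replicate.mpr ⟨by omega, rfl⟩
        rw [hx_eq] at ih
        exact Or.inr (Or.inr (Or.inr ⟨q', k, s', hp1, rfl, rfl, hblock 0 h0x, hd, ih⟩))
    · -- x contains a b : contradiction
      exfalso
      have e2 : B q = B (x.length - p) ++ B (q - (x.length - p) - 1 + 1) := by
        rw [← List.replicate_add]; congr 1; omega
      have hsplit : A p ++ B q
          = (A p ++ B (x.length - p)) ++ ((1 : Fin 2) :: B (q - (x.length - p) - 1)) := by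
        rw [e2, B_succ]; simp [List.append_assoc]
      rw [hsplit] at hw
      obtain ⟨hx_eq, hcons⟩ := List.append_inj hw (by simp [A, B]; omega)
      have ha : a = 1 := (List.cons.inj hcons).1
      have h1x : (1 : Fin 2) ∈ x := by
        rw [hx_eq]
        exact List.mem_append.mpr (Or.inr (List.mem_replicate.mpr ⟨by omega, rfl⟩))
      rw [ha, hblock 1 h1x] at hd
      exact absurd hd (Set.notMem_empty _)

/-- Main lemma: an accepting run on `a^p b^q` with `j` jumps either satisfies
`p ≤ |Q| (j+1)` or can be pumped. -/
lemma main (M : FATL (Fin 2)) :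
    ∀ (n p q : ℕ), p + q = n → ∀ (s f : M.Q) (j : ℕ) (S : Finset M.Q),
      s ∉ S → (∀ u ∈ S, ∃ d, 0 < d ∧ AChain M u s d) →
      M.Steps (s, A p ++ B q) (f, []) j →
      p + S.card ≤ Fintype.card M.Q * (j + 1) ∨
      ∃ t, 0 < t ∧ M.Steps (s, A (p + t) ++ B q) (f, []) j := by
  classical
  intro n
  induction n with
  | zero =>
    intro p q hpq s f j S hs hS h
    left
    have h1 : S.card ≤ Fintype.card M.Q := Finset.card_le_univ S
    have h2 : Fintype.card M.Q * 1 ≤ Fintype.card M.Q * (j + 1) :=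
      Nat.mul_le_mul_left _ (by omega)
    have hp : p = 0 := by omega
    calc p + S.card = S.card := by omega
      _ ≤ Fintype.card M.Q * 1 := by omega
      _ ≤ _ := h2
  | succ n ih =>
    intro p q hpq s f j S hs hS h
    rcases steps_inv M h with ⟨hp, hq, _, _⟩ |
      ⟨p', s', rfl, hδ, h'⟩ | ⟨q', s', rfl, rfl, hδ, h'⟩ |
      ⟨q', j', s', hp1, rfl, rfl, hδ0, hδ, h'⟩
    · left
      have h1 : S.card ≤ Fintype.card M.Q := Finset.card_le_univ S
      have h2 : Fintype.card M.Q * 1 ≤ Fintype.card M.Q * (j + 1) :=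
        Nat.mul_le_mul_left _ (by omega)
      calc p + S.card = S.card := by omega
        _ ≤ Fintype.card M.Q * 1 := by omega
        _ ≤ _ := h2
    · -- ordinary step reading an `a`
      by_cases hmem : s' ∈ insert s S
      · -- a loop is found: pump it
        right
        have hloop : ∃ d, 0 < d ∧ AChain M s' s' d := by
          rcases Finset.mem_insert.mp hmem with rfl | hsS
          · exact ⟨1, one_pos, .step hδ (.refl _)⟩
          · obtain ⟨d, hd, hc⟩ := hS s' hsS
            exact ⟨d + 1, by omega, hc.snoc hδ⟩
        obtain ⟨t, ht, hc⟩ := hloop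
        refine ⟨t, ht, ?_⟩
        have h2 := pumpChain hc h'
        rw [show p' + 1 + t = (p' + t) + 1 by omega]
        exact FATL.Steps.ord hδ h2
      · -- recurse, remembering the current state
        have hS' : ∀ u ∈ insert s S, ∃ d, 0 < d ∧ AChain M u s' d := by
          intro u hu
          rcases Finset.mem_insert.mp hu with rfl | hu
          · exact ⟨1, one_pos, .step hδ (.refl _)⟩
          · obtain ⟨d, hd, hc⟩ := hS u hu
            exact ⟨d + 1, by omega, hc.snoc hδ⟩
        rcases ih p' q (by omega) s' f j _ hmem hS' h' with hle | ⟨t, ht, hst⟩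
        · left
          have hcard : (insert s S).card = S.card + 1 := Finset.card_insert_of_notMem hs
          omega
        · right
          refine ⟨t, ht, ?_⟩
          rw [show p' + 1 + t = (p' + t) + 1 by omega]
          exact FATL.Steps.ord hδ hst
    · -- ordinary step reading a `b` (only when p = 0)
      left
      have h1 : S.card ≤ Fintype.card M.Q := Finset.card_le_univ S
      have h2 : Fintype.card M.Q * 1 ≤ Fintype.card M.Q * (j + 1) :=
        Nat.mul_le_mul_left _ (by omega)
      calc 0 + S.card = S.card := by omega
        _ ≤ Fintype.card M.Q * 1 := by omega
        _ ≤ _ := h2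
    · -- jump step
      rcases ih p q' (by omega) s' f j' ∅ (Finset.notMem_empty _) (by simp) h' with
        hle | ⟨t, ht, hst⟩
      · left
        have h1 : S.card ≤ Fintype.card M.Q := Finset.card_le_univ S
        have h2 : Fintype.card M.Q * (j' + 1 + 1)
            = Fintype.card M.Q * (j' + 1) + Fintype.card M.Q := by ring
        omega
      · right
        refine ⟨t, ht, ?_⟩
        have hxne : A (p + t) ≠ [] := by
          simp only [A, ne_eq, List.replicate_eq_nil_iff]
          omega
        have hbl : ∀ b ∈ A (p + t), M.δ s b = ∅ := by
          intro b hb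
          rw [List.eq_of_mem_replicate hb]
          exact hδ0
        exact FATL.Steps.jump hδ hxne hbl hst

lemma steps_jumps_le (M : FATL V) {c c' : M.Q × List V} {j : ℕ}
    (h : M.Steps c c' j) : j + c'.2.length ≤ c.2.length := by
  induction h with
  | refl c => omega
  | ord h _ ih =>
    dsimp only at ih ⊢
    simp only [List.length_cons]
    omega
  | jump h hx hb _ ih =>
    dsimp only at ih ⊢
    simp only [List.length_append, List.length_cons] at ih ⊢
    omega

lemma jcW_le_length (M : FATL V) (w : List V) : M.jcW w ≤ w.length := by
  by_cases hne : {j | M.AcceptsN w j}.Nonempty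
  · obtain ⟨f, hf, hrun⟩ := Nat.sInf_mem hne
    have := steps_jumps_le M hrun
    simpa [FATL.jcW] using this
  · rw [Set.not_nonempty_iff_eq_empty] at hne
    simp [FATL.jcW, hne]

lemma jcW_le_jcFun (M : FATL V) (w : List V) : M.jcW w ≤ M.jcFun w.length := by
  apply le_csSup
  · refine ⟨w.length, ?_⟩
    rintro m ⟨w', hw', rfl⟩
    calc M.jcW w' ≤ w'.length := jcW_le_length M w'
      _ = w.length := hw'
  · exact ⟨w, rfl, rfl⟩

lemma key (M : FATL (Fin 2))
    (hM : M.language = {w : List (Fin 2) | w.count 0 = w.count 1 ∧ 1 ≤ w.count 0})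
    {k : ℕ} (hk : 1 ≤ k) :
    k ≤ Fintype.card M.Q * (M.jcW (A k ++ B k) + 1) := by
  have hcount : ∀ p q : ℕ, (A p ++ B q).count 0 = p ∧ (A p ++ B q).count 1 = q := by
    intro p q
    constructor <;> simp [A, B, List.count_append, List.count_replicate]
  have hmem : (A k ++ B k) ∈ M.language := by
    rw [hM]
    exact ⟨by rw [(hcount k k).1, (hcount k k).2], by rw [(hcount k k).1]; omega⟩
  obtain ⟨j0, hacc⟩ := hmem
  have hne : {j | M.AcceptsN (A k ++ B k) j}.Nonempty := ⟨j0, hacc⟩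
  have hjc : M.AcceptsN (A k ++ B k) (M.jcW (A k ++ B k)) := Nat.sInf_mem hne
  obtain ⟨f, hf, hrun⟩ := hjc
  rcases main M (k + k) k k rfl M.q₀ f _ ∅ (Finset.notMem_empty _) (by simp) hrun with
    hle | ⟨t, ht, hst⟩
  · simpa using hle
  · exfalso
    have hmem2 : (A (k + t) ++ B k) ∈ M.language := ⟨_, f, hf, hst⟩
    rw [hM] at hmem2
    obtain ⟨h1, h2⟩ := hmem2
    rw [(hcount (k + t) k).1, (hcount (k + t) k).2] at h1
    omega

end FATLaux

/-- If an FATL accepts `{ w ∈ {a,b}* : |w|_a = |w|_b ≥ 1 }` (with `a = 0`, `b = 1` in `Fin 2`),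
then its jumping complexity is in `Ω(n)`. -/
theorem fatl_equal_counts_jc_omega_linear (M : FATL (Fin 2))
    (hM : M.language = {w : List (Fin 2) | w.count 0 = w.count 1 ∧ 1 ≤ w.count 0}) :
    InOmegaLinear M.jcFun := by
  classical
  set N := Fintype.card M.Q with hN
  have hN1 : 1 ≤ N := Fintype.card_pos_iff.mpr ⟨M.q₀⟩
  refine ⟨4 * N, by omega, ?_⟩
  intro m
  set k := max m (2 * N) with hk
  have hk2N : 2 * N ≤ k := le_max_right _ _
  have hkm : m ≤ k := le_max_left _ _
  have hk1 : 1 ≤ k := by omega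
  refine ⟨2 * k, by omega, ?_⟩
  have hkey : k ≤ N * (M.jcW (FATLaux.A k ++ FATLaux.B k) + 1) := FATLaux.key M hM hk1
  have hlen : (FATLaux.A k ++ FATLaux.B k).length = 2 * k := by
    simp [FATLaux.A, FATLaux.B]; omega
  have hjf : M.jcW (FATLaux.A k ++ FATLaux.B k) ≤ M.jcFun (2 * k) := by
    rw [← hlen]; exact FATLaux.jcW_le_jcFun M _
  set j := M.jcW (FATLaux.A k ++ FATLaux.B k) with hj
  have h1 : k ≤ N * j + N := by
    calc k ≤ N * (j + 1) := hkey
      _ = N * j + N := by ring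
  have h2 : N * j ≤ N * M.jcFun (2 * k) := Nat.mul_le_mul_left _ hjf
  calc 2 * k ≤ 4 * (N * j) := by omega
    _ ≤ 4 * (N * M.jcFun (2 * k)) := by omega
    _ = 4 * N * M.jcFun (2 * k) := by ring
end
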